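/- arXiv:1402.1553 — 2 statements merged into one kernel-verified Lean document; each statement's English description precedes it below -/
import Mathlib

section
/- For every even r ≥ 2 (more generally every r > 1), there exist two binary phylogenetic trees T1, T2 on n = (r+1)^2 taxa and an (r+1)-state character f with |l_f(T1) - l_f(T2)| = r^2, while every r-state character f̂ satisfies |l_{f̂}(T1) - l_{f̂}(T2)| ≤ r^2 - 2. Hence no fixed number of states suffices to achieve the MP distance for all pairs of trees. -/
/-- A phylogenetic `X`-tree: a finite tree together with an injective
labelling of the taxa `X` by vertices. -/
structure PhyloTree (X : Type) where
  V : Type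
  [fintypeV : Fintype V]
  G : SimpleGraph V
  connected : G.Connected
  acyclic : G.IsAcyclic
  leaf : X ↪ V

namespace PhyloTree

variable {X : Type}

/-- `g` extends the character `f` to all vertices of the tree. -/
def IsExtension {C : Type} (T : PhyloTree X) (f : X → C) (g : T.V → C) : Prop :=
  ∀ x, g (T.leaf x) = f x

/-- The number of edges whose endpoints receive different states under `g`. -/
noncomputable def mutCount {C : Type} (T : PhyloTree X) (g : T.V → C) : ℕ :=
  Set.ncard { e | e ∈ T.G.edgeSet ∧ ∃ u v : T.V, e = s(u, v) ∧ g u ≠ g v }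

/-- The parsimony score `l_f(T)` of a character `f` on the tree `T`. -/
noncomputable def score {C : Type} (T : PhyloTree X) (f : X → C) : ℕ :=
  sInf { n | ∃ g : T.V → C, T.IsExtension f g ∧ T.mutCount g = n }

/-- The Maximum Parsimony distance `d_MP(T₁,T₂) = max_f |l_f(T₁) - l_f(T₂)|`. -/
noncomputable def dMP (T₁ T₂ : PhyloTree X) : ℕ :=
  sSup { n | ∃ f : X → ℕ, n = ((T₁.score f : ℤ) - (T₂.score f : ℤ)).natAbs }

end PhyloTree

/-- An (unrooted) binary phylogenetic `X`-tree: the taxa are exactly the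
degree-1 vertices and every other vertex has degree 3. -/
def PhyloTree.IsBinary {X : Type} (T : PhyloTree X) : Prop :=
  (∀ x, (T.G.neighborSet (T.leaf x)).ncard = 1) ∧
  ∀ v : T.V, v ∉ Set.range T.leaf → (T.G.neighborSet v).ncard = 3

/-!
Both trees are one caterpillar of `r + 1` clades of `r + 1` taxa each. Arrange the taxa in an
`(r + 1) × (r + 1)` grid whose rows are the clades of `T₁` and whose columns are the clades of
`T₂`. The column character `f` shows all `r + 1` states inside every clade of `T₁`, so it needs
`r` changes in each of them and `l_f(T₁) = (r + 1) r`, while it is constant on the clades of `T₂`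
and `l_f(T₂) = r`.

For an `r`-state character `f̂`, giving every inner vertex of `T₁` a most frequent state `c` shows
`l(T₁) ≤ (r + 1)² - |f̂⁻¹(c)|`, and always `l(T₂) ≥ r - 1`. If `l(T₂) ≥ r`, pigeonhole gives a
state occurring `r + 3` times. If `l(T₂) = r - 1`, an optimal extension on `T₂` keeps every state
class connected, so a state occurring in two clades of `T₂` is the state of the root of each of
them; the clade sets of such states are then disjoint, and counting cells yields a state occurring
`r + 4` times. Either way `l(T₁) - l(T₂) ≤ r² - 2`, and symmetrically.
-/

namespace SimpleGraph

variable {W C D : Type*} (H : SimpleGraph W)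

def mutSet (g : W → C) : Set (Sym2 W) :=
  { e | e ∈ H.edgeSet ∧ ∃ u v : W, e = s(u, v) ∧ g u ≠ g v }

def monoGraph (g : W → C) : SimpleGraph W where
  Adj u v := H.Adj u v ∧ g u = g v
  symm := ⟨fun _ _ h => ⟨h.1.symm, h.2.symm⟩⟩
  loopless := ⟨fun v h => H.loopless.irrefl v h.1⟩

variable {H}

@[simp]
lemma mk_mem_mutSet {g : W → C} {a b : W} : s(a, b) ∈ H.mutSet g ↔ H.Adj a b ∧ g a ≠ g b := by
  refine ⟨fun ⟨he, u, v, huv, hne⟩ => ⟨he, ?_⟩, fun ⟨hab, hne⟩ => ⟨hab, a, b, rfl, hne⟩⟩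
  rcases Sym2.eq_iff.1 huv with ⟨rfl, rfl⟩ | ⟨rfl, rfl⟩
  exacts [hne, Ne.symm hne]

lemma mutSet_mono {H' : SimpleGraph W} (hle : H' ≤ H) (g : W → C) :
    H'.mutSet g ⊆ H.mutSet g :=
  fun _ ⟨he, u, v, huv, hne⟩ => ⟨edgeSet_mono hle he, u, v, huv, hne⟩

lemma mutSet_comp_subset (σ : C → D) (g : W → C) : H.mutSet (σ ∘ g) ⊆ H.mutSet g :=
  fun _ ⟨he, u, v, huv, hne⟩ => ⟨he, u, v, huv, fun h => hne (congrArg σ h)⟩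

lemma Reachable.apply_eq_of_monoGraph {g : W → C} {u v : W} (h : (H.monoGraph g).Reachable u v) :
    g u = g v := by
  obtain ⟨p⟩ := h
  induction p with
  | nil => rfl
  | cons hadj _ ih => exact hadj.2.trans ih

lemma Walk.exists_mem_mutSet {g : W → C} {u v : W} (p : H.Walk u v) (huv : g u ≠ g v) :
    ∃ a b, s(a, b) ∈ H.mutSet g := by
  obtain ⟨d, -, hd₁, hd₂⟩ := p.exists_boundary_dart {w | g w = g u} rfl huv.symm
  exact ⟨_, _, mk_mem_mutSet.2 ⟨d.adj, fun h => hd₂ (h.symm.trans hd₁)⟩⟩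

lemma mutSet_merge_ssubset [DecidableEq C] {g : W → C} {u v : W} (h : s(u, v) ∈ H.mutSet g) :
    H.mutSet ((fun c => if c = g u then g v else c) ∘ g) ⊂ H.mutSet g := by
  refine Set.ssubset_iff_of_subset (mutSet_comp_subset _ g) |>.2 ⟨_, h, fun h' => ?_⟩
  exact (mk_mem_mutSet.1 h').2 (by simp)

theorem ncard_image_le_ncard_mutSet_add_one [Finite W] {L : Set W}
    (hL : ∀ x ∈ L, ∀ y ∈ L, H.Reachable x y) (g : W → C) :
    (g '' L).ncard ≤ (H.mutSet g).ncard + 1 := by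
  induction hn : (H.mutSet g).ncard using Nat.strong_induction_on generalizing C with
  | _ n ih =>
  classical
  rcases le_or_gt (g '' L).ncard 1 with h | h
  · omega
  obtain ⟨_, _, ⟨x, hx, rfl⟩, ⟨y, hy, rfl⟩, hxy⟩ := (Set.one_lt_ncard_iff (Set.toFinite _)).1 h
  obtain ⟨u, v, huv⟩ := (hL x hx y hy).some.exists_mem_mutSet hxy
  set g' := (fun c => if c = g u then g v else c) ∘ g
  have hlt : (H.mutSet g').ncard < n :=
    hn ▸ Set.ncard_lt_ncard (mutSet_merge_ssubset huv) (Set.toFinite _)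
  have himage : g '' L ⊆ insert (g u) (g' '' L) := by
    rintro _ ⟨z, hz, rfl⟩
    by_cases hzu : g z = g u
    · exact Or.inl hzu
    · exact Or.inr ⟨z, hz, by simp [g', hzu]⟩
  calc (g '' L).ncard ≤ (insert (g u) (g' '' L)).ncard := Set.ncard_le_ncard himage
    _ ≤ (g' '' L).ncard + 1 := Set.ncard_insert_le _ _
    _ ≤ n + 1 := by have := ih _ hlt g' rfl; omega

/-- By `ncard_image_le_ncard_mutSet_add_one`, `hg` says that `g` has as few mutations as the
states it shows on `L` allow. -/
theorem monoGraph_reachable_of_ncard_mutSet_lt [Finite W] (hH : H.Preconnected) {L : Set W}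
    (g : W → C) (hg : (H.mutSet g).ncard < (g '' L).ncard) {x y : W} (hx : x ∈ L) (hy : y ∈ L)
    (hxy : g x = g y) : (H.monoGraph g).Reachable x y := by
  classical
  by_contra hcon
  let comp : Set W := {v | (H.monoGraph g).Reachable x v}
  -- recolour the monochromatic component of `x` by a fresh state
  let g' : W → Option C := fun v => if v ∈ comp then none else some (g v)
  have hsub : H.mutSet g' ⊆ H.mutSet g := by
    rintro _ ⟨he, u, v, rfl, hne⟩
    refine mk_mem_mutSet.2 ⟨he, fun huv => hne ?_⟩
    have hadj : (H.monoGraph g).Adj u v := ⟨he, huv⟩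
    by_cases hu : u ∈ comp
    · have hv : v ∈ comp := Reachable.trans hu hadj.reachable
      simp [g', hu, hv]
    · have hv : v ∉ comp := fun hv => hu (hv.trans hadj.symm.reachable)
      simp [g', hu, hv, huv]
  have himage : insert none (some '' (g '' L)) ⊆ g' '' L := by
    rintro _ (rfl | ⟨_, ⟨z, hz, rfl⟩, rfl⟩)
    · exact ⟨x, hx, by simp [g', comp]⟩
    by_cases hzx : g z = g x
    · exact ⟨y, hy, by simp [g', comp, hcon, hzx, hxy]⟩
    · have hz' : z ∉ comp := fun h => hzx (Reachable.apply_eq_of_monoGraph h).symm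
      exact ⟨z, hz, by simp [g', hz']⟩
  have hcard : (g '' L).ncard + 1 ≤ (g' '' L).ncard := by
    calc (g '' L).ncard + 1 = (insert none (some '' (g '' L))).ncard := by
          rw [Set.ncard_insert_of_notMem (by simp) (Set.toFinite _),
            Set.ncard_image_of_injective _ (Option.some_injective C)]
      _ ≤ (g' '' L).ncard := Set.ncard_le_ncard himage (Set.toFinite _)
  have := ncard_image_le_ncard_mutSet_add_one (fun a _ b _ => hH a b) (L := L) g'
  have := Set.ncard_le_ncard hsub (Set.toFinite _)
  omega

lemma reachable_of_forall_exists_adj_lt {P : Set W} {rt : W} (ρ : W → ℕ)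
    (hP : ∀ w ∈ P, w ≠ rt → ∃ u ∈ P, H.Adj w u ∧ ρ u < ρ w) {v : W} (hv : v ∈ P) :
    H.Reachable v rt := by
  induction hn : ρ v using Nat.strong_induction_on generalizing v with
  | _ n ih =>
  by_cases hvr : v = rt
  · exact hvr ▸ Reachable.refl v
  obtain ⟨u, hu, hadj, hlt⟩ := hP v hv hvr
  exact hadj.reachable.trans (ih _ (hn ▸ hlt) hu rfl)

lemma three_le_ncard_neighborSet [Finite W] {v a b c : W} (ha : H.Adj v a) (hb : H.Adj v b)
    (hc : H.Adj v c) (hab : a ≠ b) (hac : a ≠ c) (hbc : b ≠ c) : 3 ≤ (H.neighborSet v).ncard := by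
  rw [← Set.ncard_eq_three.2 ⟨a, b, c, hab, hac, hbc, rfl⟩]
  refine Set.ncard_le_ncard (fun x hx => ?_) (Set.toFinite _)
  rcases hx with rfl | rfl | rfl <;> assumption

lemma IsTree.ncard_neighborSet_eq_of_le [Fintype W] (hH : H.IsTree) {b : W → ℕ}
    (hb : ∀ v, b v ≤ (H.neighborSet v).ncard) (hsum : ∑ v, b v + 2 = 2 * Fintype.card W)
    (v : W) : (H.neighborSet v).ncard = b v := by
  classical
  have hdeg (v : W) : (H.neighborSet v).ncard = H.degree v := by
    rw [← card_neighborFinset_eq_degree, ← Set.ncard_coe_finset, coe_neighborFinset]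
  have hsum' : ∑ v, b v = ∑ v, (H.neighborSet v).ncard := by
    have := hH.card_edgeFinset
    simp only [hdeg, sum_degrees_eq_twice_card_edges]
    omega
  exact (Finset.sum_eq_sum_iff_of_le fun v _ => hb v).1 hsum' v (Finset.mem_univ v) |>.symm

def parentGraph (par : W → W) : SimpleGraph W := fromRel fun a b => par a = b

lemma parentGraph_adj {par : W → W} {a b : W} :
    (parentGraph par).Adj a b ↔ a ≠ b ∧ (par a = b ∨ par b = a) :=
  fromRel_adj ..

structure IsRankedParentMap (par : W → W) (rt : W) (ρ : W → ℕ) : Prop where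
  map_root : par rt = rt
  rank_lt : ∀ w, w ≠ rt → ρ (par w) < ρ w

namespace IsRankedParentMap

variable {par : W → W} {rt : W} {ρ : W → ℕ} (h : IsRankedParentMap par rt ρ)
include h

lemma adj_par {w : W} (hw : w ≠ rt) : (parentGraph par).Adj w (par w) :=
  parentGraph_adj.2 ⟨fun he => (h.rank_lt w hw).ne (congrArg ρ he.symm), Or.inl rfl⟩

lemma adj_of_par_eq {a v : W} (ha : a ≠ rt) (hav : par a = v) : (parentGraph par).Adj v a :=
  hav ▸ (h.adj_par ha).symm

lemma rank_par_le (w : W) : ρ (par w) ≤ ρ w := by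
  by_cases hw : w = rt
  · rw [hw, h.map_root]
  · exact (h.rank_lt w hw).le

lemma three_le_ncard_neighborSet [Finite W] {v a b : W} (hv : v ≠ rt) (ha : par a = v)
    (hb : par b = v) (hab : a ≠ b) : 3 ≤ ((parentGraph par).neighborSet v).ncard := by
  have hart : a ≠ rt := fun har => hv (by rw [← ha, har, h.map_root])
  have hbrt : b ≠ rt := fun hbr => hv (by rw [← hb, hbr, h.map_root])
  have hpar (c : W) (hc : c ≠ rt) (hcv : par c = v) : par v ≠ c := fun hvc => by
    have hlt := h.rank_lt c hc
    have hle := h.rank_par_le v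
    rw [hcv] at hlt
    rw [hvc] at hle
    omega
  exact SimpleGraph.three_le_ncard_neighborSet (h.adj_of_par_eq hart ha) (h.adj_of_par_eq hbrt hb)
    (h.adj_par hv) hab (hpar a hart ha).symm (hpar b hbrt hb).symm

lemma connected : (parentGraph par).Connected := by
  have hrt (v : W) : (parentGraph par).Reachable v rt :=
    reachable_of_forall_exists_adj_lt ρ (P := Set.univ)
      (fun w _ hw => ⟨par w, trivial, h.adj_par hw, h.rank_lt w hw⟩) trivial
  exact connected_iff_exists_forall_reachable _ |>.2 ⟨rt, fun v => (hrt v).symm⟩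

lemma edgeSet_eq : (parentGraph par).edgeSet = (fun w => s(w, par w)) '' {w | w ≠ rt} := by
  ext e
  induction e with | _ a b =>
  refine ⟨fun hab => ?_, ?_⟩
  · rw [mem_edgeSet] at hab
    obtain ⟨hne, hpar | hpar⟩ := parentGraph_adj.1 hab
    · subst hpar
      exact ⟨a, fun ha => hne (by rw [ha, h.map_root]), rfl⟩
    · subst hpar
      exact ⟨b, fun hb => hne (by rw [hb, h.map_root]), Sym2.eq_swap⟩
  · rintro ⟨w, hw, hwe⟩
    exact hwe ▸ h.adj_par hw

lemma injOn_mk_par : Set.InjOn (fun w => s(w, par w)) {w | w ≠ rt} := by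
  intro a ha b hb hab
  rcases Sym2.eq_iff.1 hab with ⟨hab, -⟩ | ⟨hab, hba⟩
  · exact hab
  · have ha' := h.rank_lt a ha
    have hb' := h.rank_lt b hb
    rw [hba] at ha'
    rw [← hab] at hb'
    omega

lemma isTree [Finite W] : (parentGraph par).IsTree := by
  refine isTree_iff_connected_and_card.2 ⟨h.connected, ?_⟩
  rw [Nat.card_coe_set_eq, h.edgeSet_eq, h.injOn_mk_par.ncard_image, ← Set.ncard_univ,
    ← Set.ncard_sdiff_singleton_add_one (Set.mem_univ rt)]
  congr 2
  ext
  simp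

lemma ncard_mutSet_le [Finite W] (g : W → C) :
    ((parentGraph par).mutSet g).ncard ≤ {w | g w ≠ g (par w)}.ncard := by
  refine (Set.ncard_le_ncard ?_ (Set.toFinite _)).trans
    (Set.ncard_image_le (f := fun w => s(w, par w)) (Set.toFinite _))
  rintro e hmut
  obtain ⟨w, -, rfl⟩ := h.edgeSet_eq ▸ hmut.1
  exact ⟨w, (mk_mem_mutSet.1 hmut).2, rfl⟩

end IsRankedParentMap

end SimpleGraph

namespace PhyloTree

open SimpleGraph

variable {X Y C : Type} (T : PhyloTree X)

attribute [local instance] PhyloTree.fintypeV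

lemma score_le_mutCount {f : X → C} {g : T.V → C} (hg : T.IsExtension f g) :
    T.score f ≤ T.mutCount g :=
  Nat.sInf_le ⟨g, hg, rfl⟩

lemma exists_isExtension_mutCount_eq_score [Nonempty C] (f : X → C) :
    ∃ g, T.IsExtension f g ∧ T.mutCount g = T.score f := by
  classical
  let g₀ : T.V → C := fun v =>
    if h : ∃ x, T.leaf x = v then f h.choose else Classical.arbitrary C
  have hg₀ : T.IsExtension f g₀ := fun x => by
    have hx : ∃ y, T.leaf y = T.leaf x := ⟨x, rfl⟩
    simp only [g₀, dif_pos hx, T.leaf.injective hx.choose_spec]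
  have hmem : T.score f ∈ {n | ∃ g : T.V → C, T.IsExtension f g ∧ T.mutCount g = n} :=
    Nat.sInf_mem ⟨_, g₀, hg₀, rfl⟩
  exact hmem

lemma image_range_leaf {f : X → C} {g : T.V → C} (hg : T.IsExtension f g) :
    g '' Set.range T.leaf = Set.range f := by
  rw [← Set.range_comp]
  exact congrArg Set.range (funext hg)

lemma ncard_range_le_mutCount_add_one {f : X → C} {g : T.V → C} (hg : T.IsExtension f g) :
    (Set.range f).ncard ≤ T.mutCount g + 1 :=
  T.image_range_leaf hg ▸
    ncard_image_le_ncard_mutSet_add_one (fun x _ y _ => T.connected.preconnected x y) g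

lemma ncard_range_le_score_add_one (f : X → C) : (Set.range f).ncard ≤ T.score f + 1 := by
  rcases isEmpty_or_nonempty C with hC | hC
  · have := f.isEmpty
    simp [Set.range_eq_empty f]
  obtain ⟨g, hg, hgf⟩ := T.exists_isExtension_mutCount_eq_score f
  exact hgf ▸ T.ncard_range_le_mutCount_add_one hg

lemma IsExtension.monoGraph_reachable {T : PhyloTree X} {f : X → C} {g : T.V → C}
    (hg : T.IsExtension f g) (hlt : T.mutCount g < (Set.range f).ncard) {x y : X}
    (hxy : f x = f y) : (T.G.monoGraph g).Reachable (T.leaf x) (T.leaf y) :=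
  monoGraph_reachable_of_ncard_mutSet_lt T.connected.preconnected g (T.image_range_leaf hg ▸ hlt)
    (Set.mem_range_self x) (Set.mem_range_self y) (by rw [hg, hg, hxy])

def relabel (e : Y ≃ X) : PhyloTree Y where
  V := T.V
  G := T.G
  connected := T.connected
  acyclic := T.acyclic
  leaf := e.toEmbedding.trans T.leaf

@[simp]
lemma relabel_leaf (e : Y ≃ X) (y : Y) : (T.relabel e).leaf y = T.leaf (e y) := rfl

lemma score_relabel (e : Y ≃ X) (f : Y → C) : (T.relabel e).score f = T.score (f ∘ e.symm) := by
  have (g : T.V → C) : (T.relabel e).IsExtension f g ↔ T.IsExtension (f ∘ e.symm) g :=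
    ⟨fun hg x => by simpa using hg (e.symm x), fun hg y => by simpa using hg (e y)⟩
  unfold score
  congr 1
  ext n
  exact exists_congr fun g => and_congr (this g) Iff.rfl

lemma score_relabel_comp (e : Y ≃ X) (f : X → C) : (T.relabel e).score (f ∘ e) = T.score f := by
  rw [score_relabel, Function.comp_assoc, e.self_comp_symm, Function.comp_id]

lemma IsBinary.relabel {T : PhyloTree X} (hT : T.IsBinary) (e : Y ≃ X) :
    (T.relabel e).IsBinary := by
  refine ⟨fun y => hT.1 (e y), fun v hv => hT.2 v fun ⟨x, hx⟩ => hv ⟨e.symm x, ?_⟩⟩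
  rw [relabel_leaf, e.apply_symm_apply]
  exact hx

end PhyloTree

namespace CaterpillarOfClades

open SimpleGraph Finset

section Grid

lemma ncard_range_val_comp {ι : Type*} {n : ℕ} {π : ι → Fin n} (hπ : Function.Surjective π) :
    (Set.range fun x => (π x : ℕ)).ncard = n := by
  rw [show (fun x => (π x : ℕ)) = Fin.val ∘ π from rfl, hπ.range_comp,
    Set.ncard_range_of_injective Fin.val_injective, Nat.card_eq_fintype_card, Fintype.card_fin]

variable {C : Type*} [DecidableEq C] {q : ℕ} (f : Fin q × Fin q → C)

def clades (c : C) : Finset (Fin q) := {i | ∃ j, f (i, j) = c}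

lemma card_fiber_le_card_clades_mul (c : C) : #{p | f p = c} ≤ #(clades f c) * q := by
  calc #{p | f p = c} ≤ #(clades f c ×ˢ (univ : Finset (Fin q))) :=
        card_le_card fun p hp => by
          simp only [mem_filter, mem_univ, true_and] at hp
          simpa [clades] using ⟨p.2, hp⟩
    _ = #(clades f c) * q := by simp

lemma sum_card_fiber : ∑ c ∈ univ.image f, #{p | f p = c} = q * q := by
  rw [← card_eq_sum_card_fiberwise fun p _ => mem_image_of_mem f (mem_univ p)]
  simp

lemma card_fiber_le_of_card_clades_lt_two {c : C} (hc : #(clades f c) < 2) :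
    #{p | f p = c} ≤ q :=
  (card_fiber_le_card_clades_mul f c).trans (by nlinarith)

lemma two_mul_card_le_card_biUnion_clades {P : Finset C} (hP : ∀ c ∈ P, 2 ≤ #(clades f c))
    (hdisj : (P : Set C).PairwiseDisjoint (clades f)) : 2 * #P ≤ #(P.biUnion (clades f)) := by
  rw [card_biUnion hdisj, mul_comm, ← smul_eq_mul, ← sum_const]
  exact sum_le_sum hP

/-- A state occurring `q` times within a single clade fills it. -/
lemma notMem_clades_of_clades_eq_singleton {c d : C} {i : Fin q} (hc : clades f c = {i})
    (hcard : q ≤ #{p | f p = c}) (hdc : d ≠ c) : i ∉ clades f d := by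
  have hsub : ({p | f p = c} : Finset _) ⊆ ({i} : Finset (Fin q)) ×ˢ univ := fun p hp => by
    simp only [mem_filter, mem_univ, true_and] at hp
    have : p.1 ∈ clades f c := by simpa [clades] using ⟨p.2, hp⟩
    exact mem_product.2 ⟨hc ▸ this, mem_univ _⟩
  have hfill := eq_of_subset_of_card_le hsub (by simpa using hcard)
  simp only [clades, mem_filter, mem_univ, true_and, not_exists]
  intro j hj
  have : (i, j) ∈ ({p | f p = c} : Finset _) := hfill ▸ by simp
  exact hdc (hj.symm.trans (by simpa using this))

/-- Either `c` occurs fewer than `q` times, or it fills clade `i`, which the other states then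
miss. -/
lemma card_fiber_add_card_biUnion_clades_lt {c : C} {i : Fin q} (hc : clades f c = {i})
    {P : Finset C} (hcP : c ∉ P) : #{p | f p = c} + #(P.biUnion (clades f)) < 2 * q := by
  have hU := card_le_univ (P.biUnion (clades f))
  rw [Fintype.card_fin] at hU
  rcases lt_or_ge #{p | f p = c} q with hlt | hge
  · omega
  have hmiss : i ∉ P.biUnion (clades f) := by
    simp only [mem_biUnion, not_exists, not_and]
    exact fun d hd => notMem_clades_of_clades_eq_singleton f hc hge fun hdc => hcP (hdc ▸ hd)
  have := card_lt_univ_of_notMem hmiss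
  have := card_fiber_le_of_card_clades_lt_two f (c := c) (by simp [hc])
  rw [Fintype.card_fin] at *
  omega

/-- Counting cells, `q² ≤ (q + 2)·#P + q·#R` where `P` and `R` are the states occurring in at
least two clades and in one clade, while `2·#P ≤ q`; `card_fiber_add_card_biUnion_clades_lt`
excludes equality. -/
theorem exists_add_three_le_card_fiber (hq : 3 ≤ q) (hcard : #(univ.image f) ≤ q - 1)
    (hdisj : {c | 2 ≤ #(clades f c)}.PairwiseDisjoint (clades f)) :
    ∃ c, q + 3 ≤ #{p | f p = c} := by
  by_contra! hsmall
  set P := (univ.image f).filter fun c => 2 ≤ #(clades f c)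
  set R := (univ.image f).filter fun c => ¬ 2 ≤ #(clades f c)
  have hPR : #P + #R ≤ q - 1 := (card_filter_add_card_filter_not _).trans_le hcard
  have hsplit : ∑ c ∈ P, #{p | f p = c} + ∑ c ∈ R, #{p | f p = c} = q * q := by
    rw [sum_filter_add_sum_filter_not, sum_card_fiber]
  have hP : ∑ c ∈ P, #{p | f p = c} ≤ #P * (q + 2) := by
    simpa using sum_le_sum fun c (_ : c ∈ P) => Nat.le_of_lt_succ (hsmall c)
  have hR (c : C) (hc : c ∈ R) : #{p | f p = c} ≤ q :=
    card_fiber_le_of_card_clades_lt_two f (not_le.1 (mem_filter.1 hc).2)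
  have hPU : 2 * #P ≤ #(P.biUnion (clades f)) :=
    two_mul_card_le_card_biUnion_clades f (fun c hc => (mem_filter.1 hc).2)
      (hdisj.subset fun c hc => (mem_filter.1 hc).2)
  have hU := card_le_univ (P.biUnion (clades f))
  rw [Fintype.card_fin] at hU
  rcases R.eq_empty_or_nonempty with hR0 | ⟨c₀, hc₀⟩
  · rw [hR0, sum_empty] at hsplit
    nlinarith
  obtain ⟨hc₀S, hc₀2⟩ := mem_filter.1 hc₀
  obtain ⟨i₀, hi₀⟩ : ∃ i, clades f c₀ = {i} := by
    obtain ⟨p, -, rfl⟩ := mem_image.1 hc₀S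
    exact card_eq_one.1 <| le_antisymm (by omega) <| card_pos.2 ⟨p.1, by simp [clades]⟩
  have hslack := card_fiber_add_card_biUnion_clades_lt f hi₀ (P := P)
    fun h => hc₀2 (mem_filter.1 h).2
  have hRsum : ∑ c ∈ R, #{p | f p = c} ≤ #{p | f p = c₀} + (#R - 1) * q := by
    rw [← add_sum_erase R _ hc₀, ← card_erase_of_mem hc₀]
    simpa using sum_le_sum fun c hc => hR c (mem_of_mem_erase hc)
  have hRpos : 1 ≤ #R := card_pos.2 ⟨c₀, hc₀⟩
  have : (#R - 1) * q + q = #R * q := by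
    rw [← Nat.succ_mul, Nat.succ_eq_add_one, Nat.sub_add_cancel hRpos]
  have : (#P + #R) * q + q ≤ q * q := by
    have := Nat.mul_le_mul_right q hPR
    obtain ⟨n, rfl⟩ : ∃ n, q = n + 1 := ⟨q - 1, by omega⟩
    simp only [Nat.add_sub_cancel] at this
    nlinarith
  nlinarith

end Grid

variable (m : ℕ)

/-- `inl (i, j)` is the taxon `(i, j)`, `inr (inl (i, t))` the `t`-th inner vertex of the `i`-th
clade and `inr (inr k)` the `k`-th spine vertex; the clades have `m + 3` taxa each. -/
abbrev Vertex := (Fin (m + 3) × Fin (m + 3)) ⊕ (Fin (m + 3) × Fin (m + 2)) ⊕ Fin (m + 1)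

variable {m}

abbrev leaf (p : Fin (m + 3) × Fin (m + 3)) : Vertex m := .inl p

abbrev inner (i : Fin (m + 3)) (t : Fin (m + 2)) : Vertex m := .inr (.inl (i, t))

abbrev spine (k : Fin (m + 1)) : Vertex m := .inr (.inr k)

/-- The tree, rooted at `spine 0`. Inside clade `i` the taxon `(i, t)` and `inner i (t + 1)` hang
from `inner i t`, except that the last two taxa share `inner i (m + 1)`; the clade roots
`inner i 0` hang from the spine in the same caterpillar pattern, the first two and the last two
sharing a spine vertex. -/
def parent : Vertex m → Vertex m
  | .inl (i, j) => inner i ⟨min j (m + 1), by omega⟩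
  | .inr (.inl (i, t)) =>
    if t.val = 0 then spine ⟨min (i - 1) m, by omega⟩ else inner i ⟨t - 1, by omega⟩
  | .inr (.inr k) => spine ⟨k - 1, by omega⟩

def rank : Vertex m → ℕ
  | .inl _ => 2 * m + 4
  | .inr (.inl (_, t)) => m + 1 + t
  | .inr (.inr k) => k

lemma isRankedParentMap : IsRankedParentMap (parent (m := m)) (spine 0) rank := by
  refine ⟨rfl, ?_⟩
  rintro (⟨i, j⟩ | ⟨i, t⟩ | k) hk
  · simp only [parent, rank]
    omega
  · simp only [parent]
    split_ifs <;> simp only [rank] <;> omega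
  · have : k.val ≠ 0 := fun h => hk (by simp [Fin.ext_iff, h])
    simp only [parent, rank]
    omega

variable (m) in
def graph : SimpleGraph (Vertex m) := parentGraph parent

variable (m) in
def tree : PhyloTree (Fin (m + 3) × Fin (m + 3)) where
  V := Vertex m
  G := graph m
  connected := isRankedParentMap.connected
  acyclic := isRankedParentMap.isTree.isAcyclic
  leaf := ⟨leaf, Sum.inl_injective⟩

lemma parent_leaf_eq (i : Fin (m + 3)) (t : Fin (m + 2)) (j : Fin (m + 3))
    (hj : j.val = t ∨ (t.val = m + 1 ∧ j.val = m + 2)) : parent (leaf (i, j)) = inner i t := by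
  simp only [parent, inner, Sum.inr.injEq, Sum.inl.injEq, Prod.mk.injEq, Fin.ext_iff, true_and]
  omega

lemma parent_inner_succ (i : Fin (m + 3)) (s : Fin (m + 1)) :
    parent (inner i s.succ) = inner i s.castSucc := by
  simp only [parent, Fin.val_succ, Nat.add_one_ne_zero, if_false]
  rfl

lemma parent_inner_zero (i : Fin (m + 3)) :
    parent (inner i 0) = spine ⟨min (i - 1) m, by omega⟩ := rfl

lemma parent_spine_succ (s : Fin m) : parent (spine s.succ) = spine s.castSucc := rfl

lemma exists_children_inner (i : Fin (m + 3)) (t : Fin (m + 2)) :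
    ∃ a b, parent a = inner i t ∧ parent b = inner i t ∧ a ≠ b := by
  refine Fin.lastCases ?_ (fun s => ?_) t
  · refine ⟨leaf (i, Fin.castSucc (Fin.last _)), leaf (i, Fin.last _), ?_, ?_, by simp⟩ <;>
      exact parent_leaf_eq _ _ _ (by simp)
  · refine ⟨leaf (i, s.castSucc.castSucc), inner i s.succ,
      parent_leaf_eq _ _ _ (by simp), parent_inner_succ i s, by simp⟩

lemma exists_children_spine (k : Fin (m + 1)) :
    ∃ b, parent b = spine k ∧ b ≠ spine 0 ∧ b ≠ inner k.succ.castSucc 0 ∧ b ≠ inner 0 0 := by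
  refine Fin.lastCases ?_ (fun s => ?_) k
  · refine ⟨inner (Fin.last _) 0, ?_, by simp, by simp [Fin.ext_iff], by simp [Fin.ext_iff]⟩
    rw [parent_inner_zero]
    simp [Fin.ext_iff]
  · exact ⟨spine s.succ, parent_spine_succ s, by simp [Fin.ext_iff], by simp, by simp⟩

lemma parent_inner_succ_zero (k : Fin (m + 1)) : parent (inner k.succ.castSucc 0) = spine k := by
  rw [parent_inner_zero]
  simp [Fin.ext_iff]
  omega

lemma parent_inner_zero_zero : parent (inner 0 0 : Vertex m) = spine 0 := rfl

lemma ncard_neighborSet_le (v : Vertex m) :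
    Sum.elim (fun _ => 1) (fun _ => 3) v ≤ ((graph m).neighborSet v).ncard := by
  have hG := isRankedParentMap (m := m)
  rcases v with p | ⟨i, t⟩ | k
  · have hadj : (graph m).Adj (leaf p) (parent (leaf p)) := hG.adj_par (by simp)
    exact (Set.ncard_pos (Set.toFinite _)).2 ⟨_, hadj⟩
  · obtain ⟨a, b, ha, hb, hab⟩ := exists_children_inner i t
    exact hG.three_le_ncard_neighborSet (by simp) ha hb hab
  · obtain ⟨b, hb, hbr, hb₁, hb₀⟩ := exists_children_spine k
    by_cases hk : k = 0
    · subst hk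
      exact three_le_ncard_neighborSet (hG.adj_of_par_eq (by simp) parent_inner_zero_zero)
        (hG.adj_of_par_eq (by simp) (parent_inner_succ_zero 0))
        (hG.adj_of_par_eq hbr hb) (by simp) (Ne.symm hb₀) (Ne.symm hb₁)
    · exact hG.three_le_ncard_neighborSet (by simpa using hk) (parent_inner_succ_zero k) hb
        (Ne.symm hb₁)

lemma tree_isBinary : (tree m).IsBinary := by
  have hsum : ∑ v : Vertex m, Sum.elim (fun _ => 1) (fun _ => 3) v + 2 =
      2 * Fintype.card (Vertex m) := by
    simp [Fintype.sum_sum_type]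
    ring
  have hdeg := isRankedParentMap.isTree.ncard_neighborSet_eq_of_le ncard_neighborSet_le hsum
  refine ⟨fun p => hdeg (.inl p), ?_⟩
  rintro (p | v) hv
  · exact absurd ⟨p, rfl⟩ hv
  · exact hdeg (.inr v)

variable {C : Type}

def cladeOf : Vertex m → Option (Fin (m + 3))
  | .inl (i, _) | .inr (.inl (i, _)) => some i
  | .inr (.inr _) => none

def clade (a : Fin (m + 3)) : Set (Vertex m) := {v | cladeOf v = some a}

lemma parent_mem_clade {a : Fin (m + 3)} {v : Vertex m} (hv : v ∈ clade a) (hva : v ≠ inner a 0) :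
    parent v ∈ clade a := by
  rcases v with ⟨i, j⟩ | ⟨i, t⟩ | k
  · exact hv
  · obtain rfl : i = a := Option.some_injective _ hv
    have ht : t.val ≠ 0 := fun ht => hva (by simp [Fin.ext_iff, ht])
    simp [parent, ht, clade, cladeOf]
  · exact absurd hv (by simp [clade, cladeOf])

lemma mem_clade_of_parent_mem {a : Fin (m + 3)} {v : Vertex m} (hv : parent v ∈ clade a) :
    v ∈ clade a := by
  rcases v with ⟨i, j⟩ | ⟨i, t⟩ | k
  · exact hv
  · simp only [parent] at hv
    split_ifs at hv
    · exact absurd hv (by simp [clade, cladeOf])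
    · exact hv
  · exact absurd hv (by simp [parent, clade, cladeOf])

lemma eq_inner_zero_of_adj {a : Fin (m + 3)} {u v : Vertex m} (huv : (graph m).Adj u v)
    (hu : u ∈ clade a) (hv : v ∉ clade a) : u = inner a 0 := by
  by_contra hua
  obtain ⟨-, rfl | rfl⟩ := parentGraph_adj.1 huv
  · exact hv (parent_mem_clade hu hua)
  · exact hv (mem_clade_of_parent_mem hu)

variable (m) in
def cladeGraph (a : Fin (m + 3)) : SimpleGraph (Vertex m) :=
  ((⊤ : (graph m).Subgraph).induce (clade a)).spanningCoe

lemma cladeGraph_adj {a : Fin (m + 3)} {u v : Vertex m} :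
    (cladeGraph m a).Adj u v ↔ u ∈ clade a ∧ v ∈ clade a ∧ (graph m).Adj u v := by
  simp [cladeGraph]

lemma cladeGraph_reachable {a : Fin (m + 3)} {v : Vertex m} (hv : v ∈ clade a) :
    (cladeGraph m a).Reachable v (inner a 0) :=
  reachable_of_forall_exists_adj_lt rank (fun w hw hwa =>
    ⟨parent w, parent_mem_clade hw hwa,
      cladeGraph_adj.2 ⟨hw, parent_mem_clade hw hwa,
        isRankedParentMap.adj_par fun h => by simp [h, clade, cladeOf] at hw⟩,
      isRankedParentMap.rank_lt w fun h => by simp [h, clade, cladeOf] at hw⟩) hv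

lemma sum_ncard_mutSet_cladeGraph_le (g : Vertex m → C) :
    ∑ a, ((cladeGraph m a).mutSet g).ncard ≤ ((graph m).mutSet g).ncard := by
  have hdisj : Pairwise fun a b =>
      Disjoint ((cladeGraph m a).mutSet g) ((cladeGraph m b).mutSet g) := by
    intro a b hab
    refine Set.disjoint_left.2 fun e hea heb => ?_
    induction e with | _ u v =>
    have hu : u ∈ clade a := (cladeGraph_adj.1 (mk_mem_mutSet.1 hea).1).1
    have hu' : u ∈ clade b := (cladeGraph_adj.1 (mk_mem_mutSet.1 heb).1).1
    exact hab (Option.some_injective _ (hu.symm.trans hu'))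
  rw [← finsum_eq_sum_of_fintype, ← Set.ncard_iUnion_of_finite (fun _ => Set.toFinite _) hdisj]
  exact Set.ncard_le_ncard (Set.iUnion_subset fun a =>
    mutSet_mono (Subgraph.spanningCoe_le _) g) (Set.toFinite _)

lemma exists_extension_mutCount_eq_score [Nonempty C] (f : Fin (m + 3) × Fin (m + 3) → C) :
    ∃ g : Vertex m → C, (tree m).IsExtension f g ∧ (tree m).mutCount g = (tree m).score f :=
  (tree m).exists_isExtension_mutCount_eq_score f

lemma mutCount_le_ncard_ne_parent (g : Vertex m → C) :
    (tree m).mutCount g ≤ {w | g w ≠ g (parent w)}.ncard :=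
  isRankedParentMap.ncard_mutSet_le g

/-- Giving every inner and spine vertex the state `c` mutates only the pendant edges of the taxa
whose state differs from `c`. -/
lemma score_add_card_fiber_le [DecidableEq C] (f : Fin (m + 3) × Fin (m + 3) → C) (c : C) :
    (tree m).score f + #{p | f p = c} ≤ (m + 3) * (m + 3) := by
  let g : Vertex m → C := Sum.elim f fun _ => c
  have hparent (w : Vertex m) : g (parent w) = c := by
    rcases w with ⟨i, j⟩ | ⟨i, t⟩ | k
    · rfl
    · simp only [parent]
      split_ifs <;> rfl
    · rfl
  have hsub : {w | g w ≠ g (parent w)} ⊆ leaf '' {p | f p ≠ c} := by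
    rintro (p | w) hw
    · exact ⟨p, fun hfp => hw ((hfp : g (.inl p) = c).trans (hparent _).symm), rfl⟩
    · exact absurd (hparent (.inr w)).symm hw
  have hne : ({p | f p ≠ c} : Set _).ncard = #{p | f p ≠ c} := by
    rw [← Set.ncard_coe_finset]
    simp
  have := ((tree m).score_le_mutCount (f := f) (g := g) fun _ => rfl).trans <|
    (mutCount_le_ncard_ne_parent g).trans <|
    (Set.ncard_le_ncard hsub (Set.toFinite _)).trans (Set.ncard_image_le (Set.toFinite _))
  have := card_filter_add_card_filter_not (s := univ) (fun p => f p = c)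
  simp only [card_univ, Fintype.card_prod, Fintype.card_fin, ne_eq] at *
  omega

lemma score_snd : (tree m).score (fun p => (p.2 : ℕ)) = (m + 3) * (m + 2) := by
  obtain ⟨g, hg, hgs⟩ := exists_extension_mutCount_eq_score fun p => (p.2 : ℕ)
  -- every clade shows all `m + 3` states on its own edges
  have hclade (a : Fin (m + 3)) : m + 2 ≤ ((cladeGraph m a).mutSet g).ncard := by
    have himage :
        g '' Set.range (fun j => leaf (a, j)) = Set.range (fun j : Fin (m + 3) => (j : ℕ)) := by
      rw [← Set.range_comp]
      exact congrArg Set.range (funext fun j => hg (a, j))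
    have := ncard_image_le_ncard_mutSet_add_one (H := cladeGraph m a)
      (L := Set.range fun j => leaf (a, j)) (by
        rintro _ ⟨j, rfl⟩ _ ⟨j', rfl⟩
        exact (cladeGraph_reachable rfl).trans (cladeGraph_reachable rfl).symm) g
    rw [himage, Set.ncard_range_of_injective Fin.val_injective, Nat.card_eq_fintype_card,
      Fintype.card_fin] at this
    omega
  have hlower := (sum_le_sum fun a _ => hclade a).trans (sum_ncard_mutSet_cladeGraph_le g)
  have hupper := score_add_card_fiber_le (m := m) (fun p => (p.2 : ℕ)) 0
  have hfiber : #{p : Fin (m + 3) × Fin (m + 3) | (p.2 : ℕ) = 0} = m + 3 := by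
    rw [show ({p | (p.2 : ℕ) = 0} : Finset (Fin (m + 3) × Fin (m + 3))) = univ ×ˢ {0} by
      ext
      simp only [mem_filter, mem_univ, true_and, mem_product, mem_singleton,
        Fin.val_eq_zero_iff]]
    simp
  simp only [sum_const, card_univ, Fintype.card_fin, smul_eq_mul] at hlower
  rw [← hgs] at hupper ⊢
  change _ ≤ (tree m).mutCount g at hlower
  have : (m + 3) * (m + 3) = (m + 3) * (m + 2) + (m + 3) := by ring
  omega

lemma score_fst : (tree m).score (fun p => (p.1 : ℕ)) = m + 2 := by
  have hlower := (tree m).ncard_range_le_score_add_one fun p => (p.1 : ℕ)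
  have hrange := ncard_range_val_comp (Prod.fst_surjective (β := Fin (m + 3)) (α := Fin (m + 3)))
  -- colour clade `i` by `i` and the spine vertex `k` by `k + 1`
  let g : Vertex m → ℕ := Sum.elim (fun p => p.1) (Sum.elim (fun p => p.1) fun k => k + 1)
  have hsub : {w | g w ≠ g (parent w)} ⊆
      {inner 0 0, inner (Fin.last _) 0} ∪ Set.range fun s : Fin m => spine s.succ := by
    rintro (⟨i, j⟩ | ⟨i, t⟩ | k) hw
    · exact absurd rfl hw
    · by_cases ht : t.val = 0
      · simp only [Set.mem_ofPred_eq, parent, ht, if_true, g, Sum.elim_inr, Sum.elim_inl] at hw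
        obtain rfl : t = 0 := Fin.ext ht
        rcases (by omega : i.val = 0 ∨ i.val = m + 2) with hi | hi
        · obtain rfl : i = 0 := Fin.ext hi
          exact Or.inl (Or.inl rfl)
        · obtain rfl : i = Fin.last _ := Fin.ext hi
          exact Or.inl (Or.inr rfl)
      · have ht' : t ≠ 0 := fun h => ht (h ▸ rfl)
        simp [g, parent, ht'] at hw
    · have hk : k ≠ 0 := by
        rintro rfl
        exact hw rfl
      obtain ⟨s, rfl⟩ := Fin.exists_succ_eq.2 hk
      exact Or.inr ⟨s, rfl⟩
  have hupper := ((tree m).score_le_mutCount (f := fun p => (p.1 : ℕ)) (g := g) fun _ => rfl).trans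
    ((mutCount_le_ncard_ne_parent g).trans <|
      (Set.ncard_le_ncard hsub (Set.toFinite _)).trans (Set.ncard_union_le _ _))
  rw [Set.ncard_range_of_injective (fun a b h => Fin.succ_injective _ (Sum.inr_injective
    (Sum.inr_injective h))), Nat.card_eq_fintype_card, Fintype.card_fin] at hupper
  have := Set.ncard_insert_le (inner 0 0 : Vertex m) {inner (Fin.last _) 0}
  rw [Set.ncard_singleton] at this
  omega

/-- The monochromatic path from taxon `(a, j)` to taxon `(b, j')` leaves clade `a` through its
root. -/
lemma apply_inner_zero_eq {f : Fin (m + 3) × Fin (m + 3) → C} {g : Vertex m → C}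
    (hg : (tree m).IsExtension f g) (hlt : (tree m).mutCount g < (Set.range f).ncard)
    {a b : Fin (m + 3)} (hab : a ≠ b) {j j' : Fin (m + 3)} (hj : f (a, j) = f (b, j')) :
    g (inner a 0) = f (a, j) := by
  classical
  obtain ⟨p⟩ := hg.monoGraph_reachable hlt hj
  obtain ⟨d, hd, hd₁, hd₂⟩ := p.exists_boundary_dart (clade a) rfl
    fun h => hab (Option.some_injective _ h).symm
  rw [← eq_inner_zero_of_adj d.adj.1 hd₁ hd₂, ← hg (a, j)]
  exact (Reachable.apply_eq_of_monoGraph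
    (p.takeUntil _ (p.dart_fst_mem_support_of_mem_darts hd)).reachable).symm

lemma pairwiseDisjoint_clades [DecidableEq C] {f : Fin (m + 3) × Fin (m + 3) → C}
    {g : Vertex m → C} (hg : (tree m).IsExtension f g)
    (hlt : (tree m).mutCount g < (Set.range f).ncard) :
    {c | 2 ≤ #(clades f c)}.PairwiseDisjoint (clades f) := by
  intro c hc d hd hcd
  refine disjoint_left.2 fun a hac had => hcd ?_
  have hroot (e : C) (he : 2 ≤ #(clades f e)) (hae : a ∈ clades f e) : g (inner a 0) = e := by
    obtain ⟨b, hb, hba⟩ := exists_mem_ne he a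
    obtain ⟨j, hj⟩ : ∃ j, f (a, j) = e := by simpa [clades] using hae
    obtain ⟨j', hj'⟩ : ∃ j, f (b, j) = e := by simpa [clades] using hb
    exact (apply_inner_zero_eq hg hlt hba.symm (hj.trans hj'.symm)).trans hj
  exact (hroot c hc hac).symm.trans (hroot d hd had)

theorem score_add_two_le (h : Fin (m + 3) × Fin (m + 3) → C) (hh : (Set.range h).ncard = m + 2) :
    (tree m).score h + 2 ≤ (tree m).score (h ∘ Prod.swap) + (m + 2) * (m + 2) := by
  classical
  set k := h ∘ Prod.swap
  have hk : (Set.range k).ncard = m + 2 := by rw [Prod.swap_surjective.range_comp, hh]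
  have himage : #(univ.image h) = m + 2 := by
    rw [← Set.ncard_coe_finset, coe_image, coe_univ, Set.image_univ, hh]
  have hfiber (c : C) : #{p | k p = c} = #{p | h p = c} :=
    card_equiv (Equiv.prodComm _ _) (by simp [k])
  have hklow := (tree m).ncard_range_le_score_add_one k
  have hsq : (m + 3) * (m + 3) = (m + 2) * (m + 2) + 2 * m + 5 := by ring
  rcases lt_or_ge ((tree m).score k) (m + 2) with hlt | hge
  · -- an optimal extension of `k` is tight, so some state of `h` occurs `m + 6` times
    have : Nonempty C := ⟨h (0, 0)⟩
    obtain ⟨g, hg, hgs⟩ := exists_extension_mutCount_eq_score k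
    have hkimage : #(univ.image k) ≤ m + 3 - 1 := by
      rw [← Set.ncard_coe_finset, coe_image, coe_univ, Set.image_univ, hk]
      omega
    obtain ⟨c, hc⟩ := exists_add_three_le_card_fiber k (by omega) hkimage
      (pairwiseDisjoint_clades hg (by omega))
    have := score_add_card_fiber_le h c
    rw [← hfiber c] at this
    omega
  · -- pigeonhole: some state of `h` occurs `m + 5` times
    obtain ⟨c, -, hc⟩ := exists_lt_card_fiber_of_mul_lt_card_of_maps_to (n := m + 4)
      (fun p _ => mem_image_of_mem h (mem_univ p)) (by
        rw [himage, card_univ, Fintype.card_prod, Fintype.card_fin]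
        nlinarith)
    have := score_add_card_fiber_le h c
    omega

end CaterpillarOfClades

open CaterpillarOfClades in
/-- For every `r > 1` there are binary trees on `(r+1)²` taxa and an
`(r+1)`-state character achieving score difference `r²`, while every `r`-state
character achieves at most `r² - 2`; hence no fixed number of states suffices
to realise the MP distance. -/
theorem no_fixed_state_number (r : ℕ) (hr : 1 < r) :
    ∃ T₁ T₂ : PhyloTree (Fin ((r + 1) ^ 2)),
      T₁.IsBinary ∧ T₂.IsBinary ∧
      (∃ f : Fin ((r + 1) ^ 2) → ℕ, (Set.range f).ncard = r + 1 ∧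
        ((T₁.score f : ℤ) - (T₂.score f : ℤ)).natAbs = r ^ 2) ∧
      ∀ (C : Type) (fhat : Fin ((r + 1) ^ 2) → C), (Set.range fhat).ncard = r →
        ((T₁.score fhat : ℤ) - (T₂.score fhat : ℤ)).natAbs ≤ r ^ 2 - 2 := by
  obtain ⟨m, rfl⟩ : ∃ m, r = m + 2 := ⟨r - 2, by omega⟩
  -- taxon `j` lies in clade `j / (r + 1)` of `T₁` and in clade `j % (r + 1)` of `T₂`
  let e₁ : Fin ((m + 2 + 1) ^ 2) ≃ Fin (m + 3) × Fin (m + 3) :=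
    (finCongr (sq _)).trans finProdFinEquiv.symm
  let e₂ := e₁.trans (Equiv.prodComm _ _)
  refine ⟨(tree m).relabel e₁, (tree m).relabel e₂, tree_isBinary.relabel e₁,
    tree_isBinary.relabel e₂, ⟨fun x => (e₁ x).2, ?_, ?_⟩, fun C fhat hfhat => ?_⟩
  · exact ncard_range_val_comp (Prod.snd_surjective.comp e₁.surjective)
  · have h₁ : ((tree m).relabel e₁).score (fun x => ((e₁ x).2 : ℕ)) = (m + 3) * (m + 2) :=
      ((tree m).score_relabel_comp e₁ _).trans score_snd
    have h₂ : ((tree m).relabel e₂).score (fun x => ((e₁ x).2 : ℕ)) = m + 2 :=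
      ((tree m).score_relabel_comp e₂ _).trans score_fst
    have : (m + 3) * (m + 2) = (m + 2) ^ 2 + (m + 2) := by ring
    omega
  · have hswap (e : Fin ((m + 2 + 1) ^ 2) ≃ Fin (m + 3) × Fin (m + 3)) :
        ((tree m).relabel e).score fhat + 2 ≤
          ((tree m).relabel (e.trans (Equiv.prodComm _ _))).score fhat + (m + 2) ^ 2 := by
      rw [PhyloTree.score_relabel, PhyloTree.score_relabel, sq (m + 2)]
      exact score_add_two_le _ (by rw [e.symm.surjective.range_comp, hfhat])
    have h₁ : _ ≤ ((tree m).relabel e₂).score fhat + _ := hswap e₁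
    have h₂ := hswap e₂
    rw [show e₂.trans (Equiv.prodComm _ _) = e₁ from Equiv.ext fun x => by simp [e₂]] at h₂
    omega
end

section
/- Every two distinct X-splits displayed as edges of a common phylogenetic X-tree are compatible, and conversely any collection of pairwise compatible X-splits is the split set of a unique (up to isomorphism) X-tree. -/
/-!
Two edges of a tree are nested: one of them lies entirely on one side of the other, so the
sides they cut off are comparable and their splits compatible.

Conversely, the vertices of Buneman's graph are the consistent orientations of `Σ` (a chosen
side of every split, any two chosen sides meeting), two orientations being adjacent when they
differ in a single split. Flipping a minimal chosen side keeps an orientation consistent, which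
makes the graph connected and bounds the number of minimal sides of a vertex by its degree; by
compatibility the edge flipping a given split `A` is unique, so it is a bridge whose sides are
the orientations containing `A`, resp. `Aᶜ`. Hence the graph is an `X`-tree with split set `Σ`.
In an `X`-tree `T`, since vertices of degree at most two are labelled, two sides that meet as
vertex sets also share a label; so the sides containing a vertex `v` form a consistent
orientation, and `v ↦` (the sides containing `v`) is an isomorphism from `T` onto Buneman's tree
of `Σ(T)`, which gives uniqueness.
-/

/-- An `X`-tree in the sense of Semple and Steel: a finite tree with a
labelling map `φ : X → V` such that every vertex of degree at most 2 is
labelled. -/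
structure XTree (X : Type) where
  V : Type
  [fintypeV : Fintype V]
  G : SimpleGraph V
  connected : G.Connected
  acyclic : G.IsAcyclic
  φ : X → V
  labelLowDegree : ∀ v : V, (G.neighborSet v).ncard ≤ 2 → v ∈ Set.range φ

/-- The set of `X`-splits induced by the edges of `T` (both sides of each edge). -/
noncomputable def XTree.splits {X : Type} (T : XTree X) : Set (Set X) :=
  { A | ∃ u v : T.V, T.G.Adj u v ∧
      A = { x | (T.G.deleteEdges {s(u, v)}).Reachable (T.φ x) u } }

/-- Compatibility of the splits `A|Aᶜ` and `B|Bᶜ`: one of the four pairwise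
intersections is empty. -/
def SplitCompatible {X : Type} (A B : Set X) : Prop :=
  A ∩ B = ∅ ∨ A ∩ Bᶜ = ∅ ∨ Aᶜ ∩ B = ∅ ∨ Aᶜ ∩ Bᶜ = ∅

/-- Isomorphism of `X`-trees. -/
def XTree.Isom {X : Type} (T₁ T₂ : XTree X) : Prop :=
  ∃ e : T₁.V ≃ T₂.V,
    (∀ u v : T₁.V, T₁.G.Adj u v ↔ T₂.G.Adj (e u) (e v)) ∧
    ∀ x, e (T₁.φ x) = T₂.φ x

attribute [instance] XTree.fintypeV

namespace SimpleGraph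

variable {V : Type*} {G : SimpleGraph V}

theorem Reachable.mem_of_adj_closed {S : Set V} (hS : ∀ ⦃u v⦄, G.Adj u v → u ∈ S → v ∈ S)
    {u v : V} (h : G.Reachable u v) (hu : u ∈ S) : v ∈ S := by
  rw [reachable_iff_reflTransGen] at h
  induction h with
  | refl => exact hu
  | tail _ hadj ih => exact hS hadj ih

def edgeSide (G : SimpleGraph V) (u v : V) : Set V :=
  {z | (G.deleteEdges {s(u, v)}).Reachable z u}

theorem mem_edgeSide_self (u v : V) : u ∈ G.edgeSide u v := Reachable.refl u

theorem mem_edgeSide_swap {u v z : V} :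
    z ∈ G.edgeSide v u ↔ (G.deleteEdges {s(u, v)}).Reachable z v := by
  rw [edgeSide, Set.mem_ofPred_eq, Sym2.eq_swap]

theorem mem_edgeSide_iff_of_adj {x y p q : V} (h : G.Adj x y) (hne : s(x, y) ≠ s(p, q)) :
    x ∈ G.edgeSide p q ↔ y ∈ G.edgeSide p q := by
  have hxy : (G.deleteEdges {s(p, q)}).Adj x y := deleteEdges_adj.mpr ⟨h, hne⟩
  exact ⟨hxy.symm.reachable.trans, hxy.reachable.trans⟩

/-- A walk to `a` avoiding `ab` never meets `c`, so it avoids `cd` as well. -/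
theorem edgeSide_subset_edgeSide {a b c d : V} (hc : c ∉ G.edgeSide a b)
    (ha : a ∈ G.edgeSide c d) : G.edgeSide a b ⊆ G.edgeSide c d := by
  intro z hz
  have hclosed : ∀ ⦃w w'⦄, (G.deleteEdges {s(a, b)}).Adj w w' →
      w ∈ G.edgeSide a b ∩ G.edgeSide c d → w' ∈ G.edgeSide a b ∩ G.edgeSide c d := by
    rintro w w' hww' ⟨hwa, hwc⟩
    have hw'a : w' ∈ G.edgeSide a b := hww'.symm.reachable.trans hwa
    refine ⟨hw'a, (mem_edgeSide_iff_of_adj (deleteEdges_adj.mp hww').1 fun heq => ?_).mp hwc⟩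
    rcases Sym2.eq_iff.mp heq with ⟨rfl, -⟩ | ⟨-, rfl⟩
    exacts [hc hwa, hc hw'a]
  exact (hz.symm.mem_of_adj_closed hclosed ⟨mem_edgeSide_self a b, ha⟩).2

theorem Preconnected.mem_edgeSide_or (hG : G.Preconnected) (u v z : V) :
    z ∈ G.edgeSide u v ∨ z ∈ G.edgeSide v u := by
  refine (hG u z).mem_of_adj_closed (S := G.edgeSide u v ∪ G.edgeSide v u)
    (fun w w' hww' hw => ?_) (Or.inl (mem_edgeSide_self u v))
  by_cases he : s(w, w') = s(u, v)
  · rcases Sym2.eq_iff.mp he with ⟨-, rfl⟩ | ⟨-, rfl⟩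
    exacts [Or.inr (mem_edgeSide_self _ _), Or.inl (mem_edgeSide_self _ _)]
  · exact hw.imp (mem_edgeSide_iff_of_adj hww' he).mp
      (mem_edgeSide_iff_of_adj hww' (by rwa [Sym2.eq_swap (a := v)])).mp

theorem Preconnected.exists_adj_mem_edgeSide (hG : G.Preconnected) {u w : V} (huw : u ≠ w) :
    ∃ m, G.Adj u m ∧ w ∈ G.edgeSide m u := by
  have hclosed : ∀ ⦃z z'⦄, G.Adj z z' → (z = u ∨ ∃ m, G.Adj u m ∧ z ∈ G.edgeSide m u) →
      z' = u ∨ ∃ m, G.Adj u m ∧ z' ∈ G.edgeSide m u := by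
    rintro z z' hzz' (rfl | ⟨m, hum, hz⟩)
    · exact Or.inr ⟨z', hzz', mem_edgeSide_self _ _⟩
    by_cases he : s(z, z') = s(m, u)
    · rcases Sym2.eq_iff.mp he with ⟨-, rfl⟩ | ⟨rfl, rfl⟩
      exacts [Or.inl rfl, Or.inr ⟨z', hum, mem_edgeSide_self _ _⟩]
    · exact Or.inr ⟨m, hum, (mem_edgeSide_iff_of_adj hzz' he).mp hz⟩
  simpa [huw.symm] using (hG u w).mem_of_adj_closed
    (S := {z | z = u ∨ ∃ m, G.Adj u m ∧ z ∈ G.edgeSide m u}) hclosed (Or.inl rfl)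

theorem IsAcyclic.notMem_edgeSide (hG : G.IsAcyclic) {u v : V} (h : G.Adj u v) :
    v ∉ G.edgeSide u v :=
  fun hv => isBridge_iff.mp (isAcyclic_iff_forall_adj_isBridge.mp hG h) hv.symm

namespace IsTree

variable (hG : G.IsTree)
include hG

theorem compl_edgeSide {u v : V} (h : G.Adj u v) : (G.edgeSide u v)ᶜ = G.edgeSide v u := by
  ext z
  refine ⟨(hG.connected.preconnected.mem_edgeSide_or u v z).resolve_left, fun hzv hzu => ?_⟩
  exact hG.isAcyclic.notMem_edgeSide h ((mem_edgeSide_swap.mp hzv).symm.trans hzu)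

theorem eq_of_adj_of_mem_edgeSide {x y p q : V} (h : G.Adj x y) (hx : x ∈ G.edgeSide p q)
    (hy : y ∉ G.edgeSide p q) : x = p ∧ y = q := by
  by_contra hne
  have he : s(x, y) = s(p, q) := by_contra fun he => hy ((mem_edgeSide_iff_of_adj h he).mp hx)
  rcases Sym2.eq_iff.mp he with hxy | ⟨rfl, rfl⟩
  exacts [hne hxy, hG.isAcyclic.notMem_edgeSide h.symm hx]

theorem eq_of_edgeSide_eq {p q r s : V} (hrs : G.Adj r s)
    (h : G.edgeSide p q = G.edgeSide r s) : p = r ∧ q = s := by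
  exact (hG.eq_of_adj_of_mem_edgeSide hrs (h ▸ mem_edgeSide_self r s)
    (h ▸ hG.isAcyclic.notMem_edgeSide hrs)).imp Eq.symm Eq.symm

theorem subset_edgeSide_iff {S : Set V} {r s : V} (hrs : G.Adj r s) :
    S ⊆ G.edgeSide r s ↔ S ∩ G.edgeSide s r = ∅ := by
  rw [← hG.compl_edgeSide hrs.symm, Set.subset_compl_iff_disjoint_right,
    Set.disjoint_iff_inter_eq_empty]

theorem edgeSide_subset_of_notMem {z e p q : V} (hze : G.Adj z e) (hpq : G.Adj p q)
    (hz : z ∈ G.edgeSide p q) (hq : q ∉ G.edgeSide e z) : G.edgeSide e z ⊆ G.edgeSide p q := by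
  rw [← compl_compl (G.edgeSide p q), hG.compl_edgeSide hpq, ← hG.compl_edgeSide hze,
    Set.compl_subset_compl]
  refine edgeSide_subset_edgeSide ?_ ?_
  · rwa [← hG.compl_edgeSide hpq, Set.notMem_compl_iff]
  · rwa [← hG.compl_edgeSide hze.symm]

theorem subsingleton_adj_mem_edgeSide (a z : V) :
    {e | G.Adj a e ∧ z ∈ G.edgeSide e a}.Subsingleton := by
  rintro e ⟨hae, hze⟩ e' ⟨hae', hze'⟩
  by_contra hne
  have hsub : G.edgeSide e a ⊆ G.edgeSide a e' := by
    refine edgeSide_subset_edgeSide (hG.isAcyclic.notMem_edgeSide hae.symm) ?_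
    refine (mem_edgeSide_iff_of_adj hae fun heq => hne ?_).mp (mem_edgeSide_self a e')
    rcases Sym2.eq_iff.mp heq with ⟨-, h⟩ | ⟨-, h⟩
    exacts [h, absurd h.symm hae.ne]
  rw [← hG.compl_edgeSide hae'] at hze'
  exact hze' (hsub hze)

end IsTree

end SimpleGraph

section SplitCompatible

variable {X Y : Type} {A B : Set X}

theorem splitCompatible_of_subset (h : A ⊆ B) : SplitCompatible A B :=
  Or.inr (Or.inl (Set.eq_empty_of_forall_notMem fun _ hx => hx.2 (h hx.1)))

theorem splitCompatible_compl_left : SplitCompatible Aᶜ B ↔ SplitCompatible A B := by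
  unfold SplitCompatible; rw [compl_compl]; tauto

theorem splitCompatible_compl_right : SplitCompatible A Bᶜ ↔ SplitCompatible A B := by
  unfold SplitCompatible; rw [compl_compl]; tauto

theorem SplitCompatible.preimage (h : SplitCompatible A B) (f : Y → X) :
    SplitCompatible (f ⁻¹' A) (f ⁻¹' B) := by
  unfold SplitCompatible at *
  simp only [← Set.preimage_compl, ← Set.preimage_inter]
  rcases h with h | h | h | h <;> simp [h]

end SplitCompatible

namespace SimpleGraph.IsTree

variable {V : Type} {G : SimpleGraph V}

theorem splitCompatible_edgeSide (hG : G.IsTree) {a b c d : V} (hab : G.Adj a b)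
    (hcd : G.Adj c d) : SplitCompatible (G.edgeSide a b) (G.edgeSide c d) := by
  obtain he | he := eq_or_ne s(a, b) s(c, d)
  · rcases Sym2.eq_iff.mp he with ⟨rfl, rfl⟩ | ⟨rfl, rfl⟩
    · exact splitCompatible_of_subset le_rfl
    · rw [← hG.compl_edgeSide hcd, splitCompatible_compl_left]
      exact splitCompatible_of_subset le_rfl
  -- `cd` lies on one side of `ab`; orient `ab` so that it is the far side
  have key : ∀ a b, G.Adj a b → s(a, b) ≠ s(c, d) → c ∉ G.edgeSide a b →
      SplitCompatible (G.edgeSide a b) (G.edgeSide c d) := by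
    intro a b hab he hc
    have hd : d ∉ G.edgeSide a b := (mem_edgeSide_iff_of_adj hcd he.symm).not.mp hc
    rcases hG.connected.preconnected.mem_edgeSide_or c d a with ha | ha
    · exact splitCompatible_of_subset (edgeSide_subset_edgeSide hc ha)
    · rw [← splitCompatible_compl_right, hG.compl_edgeSide hcd]
      exact splitCompatible_of_subset (edgeSide_subset_edgeSide hd ha)
  by_cases hc : c ∈ G.edgeSide a b
  · rw [← splitCompatible_compl_left, hG.compl_edgeSide hab]
    exact key b a hab.symm (by rwa [Sym2.eq_swap])
      (by rwa [← hG.compl_edgeSide hab, Set.notMem_compl_iff])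
  · exact key a b hab he hc

end SimpleGraph.IsTree

namespace XTree

open SimpleGraph

variable {X : Type} (T : XTree X)

def side (u v : T.V) : Set X := T.φ ⁻¹' T.G.edgeSide u v

theorem isTree : T.G.IsTree := ⟨T.connected, T.acyclic⟩

theorem mem_splits {A : Set X} : A ∈ T.splits ↔ ∃ u v, T.G.Adj u v ∧ A = T.side u v := Iff.rfl

variable {T}

theorem side_swap {u v : T.V} (h : T.G.Adj u v) : T.side v u = (T.side u v)ᶜ := by
  rw [side, side, ← T.isTree.compl_edgeSide h, Set.preimage_compl]

theorem exists_adj_edgeSide_subset {z p q r s : T.V} (hz : z ∉ Set.range T.φ)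
    (hpq : T.G.Adj p q) (hrs : T.G.Adj r s) (hzp : z ∈ T.G.edgeSide p q)
    (hzr : z ∈ T.G.edgeSide r s) :
    ∃ e, T.G.Adj z e ∧ T.G.edgeSide e z ⊆ T.G.edgeSide p q ∩ T.G.edgeSide r s := by
  set P := {e | T.G.Adj z e ∧ q ∈ T.G.edgeSide e z}
  set Q := {e | T.G.Adj z e ∧ s ∈ T.G.edgeSide e z}
  -- `z` is unlabelled, so it has a third neighbour besides those leading towards `q` and `s`
  obtain ⟨e, hze, he⟩ : ∃ e, T.G.Adj z e ∧ e ∉ P ∪ Q := by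
    by_contra! h
    refine hz (T.labelLowDegree z ?_)
    calc (T.G.neighborSet z).ncard ≤ (P ∪ Q).ncard := Set.ncard_le_ncard h
      _ ≤ P.ncard + Q.ncard := Set.ncard_union_le _ _
      _ ≤ 1 + 1 := add_le_add
          (Set.ncard_le_one_iff_subsingleton.mpr (T.isTree.subsingleton_adj_mem_edgeSide z q))
          (Set.ncard_le_one_iff_subsingleton.mpr (T.isTree.subsingleton_adj_mem_edgeSide z s))
  simp only [P, Q, Set.mem_union, Set.mem_ofPred_eq, not_or, hze, true_and] at he
  exact ⟨e, hze, Set.subset_inter (T.isTree.edgeSide_subset_of_notMem hze hpq hzp he.1)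
    (T.isTree.edgeSide_subset_of_notMem hze hrs hzr he.2)⟩

theorem exists_label_mem_edgeSide_inter {p q r s z : T.V} (hpq : T.G.Adj p q)
    (hrs : T.G.Adj r s) (hz : z ∈ T.G.edgeSide p q ∩ T.G.edgeSide r s) :
    ∃ x, T.φ x ∈ T.G.edgeSide p q ∩ T.G.edgeSide r s := by
  induction hn : (T.G.edgeSide p q ∩ T.G.edgeSide r s).ncard using Nat.strong_induction_on
    generalizing p q r s z with
  | _ n ih =>
    by_cases hzφ : z ∈ Set.range T.φ
    · obtain ⟨x, rfl⟩ := hzφ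
      exact ⟨x, hz⟩
    obtain ⟨e, hze, hsub⟩ := exists_adj_edgeSide_subset hzφ hpq hrs hz.1 hz.2
    have hlt : (T.G.edgeSide e z ∩ T.G.edgeSide e z).ncard < n := by
      rw [Set.inter_self, ← hn]
      exact Set.ncard_lt_ncard ((Set.ssubset_iff_of_subset hsub).mpr
        ⟨z, hz, T.acyclic.notMem_edgeSide hze.symm⟩)
    obtain ⟨x, hx, -⟩ := ih _ hlt hze.symm hze.symm
      ⟨mem_edgeSide_self e z, mem_edgeSide_self e z⟩ rfl
    exact ⟨x, hsub hx⟩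

theorem side_nonempty {u v : T.V} (h : T.G.Adj u v) : (T.side u v).Nonempty :=
  (exists_label_mem_edgeSide_inter h h ⟨mem_edgeSide_self u v, mem_edgeSide_self u v⟩).imp
    fun _ hx => hx.1

theorem edgeSide_inter_eq_empty {p q r s : T.V} (hpq : T.G.Adj p q) (hrs : T.G.Adj r s)
    (h : T.side p q ∩ T.side r s = ∅) : T.G.edgeSide p q ∩ T.G.edgeSide r s = ∅ :=
  Set.eq_empty_of_forall_notMem fun _ hz =>
    let ⟨x, hx⟩ := exists_label_mem_edgeSide_inter hpq hrs hz
    Set.eq_empty_iff_forall_notMem.mp h x hx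

theorem eq_of_side_eq {p q r s : T.V} (hpq : T.G.Adj p q) (hrs : T.G.Adj r s)
    (h : T.side p q = T.side r s) : p = r ∧ q = s := by
  refine T.isTree.eq_of_edgeSide_eq hrs (Set.Subset.antisymm ?_ ?_)
  · rw [T.isTree.subset_edgeSide_iff hrs]
    exact edgeSide_inter_eq_empty hpq hrs.symm (by rw [side_swap hrs, h, Set.inter_compl_self])
  · rw [T.isTree.subset_edgeSide_iff hpq]
    exact edgeSide_inter_eq_empty hrs hpq.symm (by rw [side_swap hpq, h, Set.inter_compl_self])

variable (T)

theorem splitCompatible_of_mem_splits : ∀ A ∈ T.splits, ∀ B ∈ T.splits, SplitCompatible A B := by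
  intro A hA B hB
  obtain ⟨a, b, hab, rfl⟩ := T.mem_splits.mp hA
  obtain ⟨c, d, hcd, rfl⟩ := T.mem_splits.mp hB
  exact (T.isTree.splitCompatible_edgeSide hab hcd).preimage T.φ

theorem ne_empty_and_ne_univ_of_mem_splits : ∀ A ∈ T.splits, A ≠ ∅ ∧ A ≠ Set.univ := by
  intro A hA
  obtain ⟨u, v, h, rfl⟩ := T.mem_splits.mp hA
  refine ⟨(side_nonempty h).ne_empty, fun huniv => ?_⟩
  obtain ⟨x, hx⟩ := side_nonempty h.symm
  rw [side_swap h, huniv, Set.compl_univ] at hx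
  exact hx

theorem compl_mem_splits : ∀ A ∈ T.splits, Aᶜ ∈ T.splits := by
  intro A hA
  obtain ⟨u, v, h, rfl⟩ := T.mem_splits.mp hA
  exact ⟨v, u, h.symm, (side_swap h).symm⟩

end XTree

theorem Set.sInter_nonempty_of_ncard_le_two {α : Type*} [Nonempty α] {M : Set (Set α)}
    (hMf : M.Finite) (hM : M.ncard ≤ 2) (h : ∀ A ∈ M, ∀ B ∈ M, (A ∩ B).Nonempty) :
    (⋂₀ M).Nonempty := by
  interval_cases hn : M.ncard
  · simp [(Set.ncard_eq_zero hMf).mp hn]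
  · obtain ⟨A, rfl⟩ := Set.ncard_eq_one.mp hn
    simpa using h A rfl A rfl
  · obtain ⟨A, B, -, rfl⟩ := Set.ncard_eq_two.mp hn
    simpa using h A (by simp) B (by simp)

section Orientation

variable {X : Type}

structure IsOrientation (Sig U : Set (Set X)) : Prop where
  subset : U ⊆ Sig
  mem_iff_compl_notMem : ∀ A ∈ Sig, A ∈ U ↔ Aᶜ ∉ U
  inter_nonempty : ∀ A ∈ U, ∀ B ∈ U, (A ∩ B).Nonempty

def labelOrientation (Sig : Set (Set X)) (x : X) : Set (Set X) := {A ∈ Sig | x ∈ A}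

theorem isOrientation_labelOrientation {Sig : Set (Set X)} (hcompl : ∀ A ∈ Sig, Aᶜ ∈ Sig)
    (x : X) : IsOrientation Sig (labelOrientation Sig x) where
  subset _ h := h.1
  mem_iff_compl_notMem A hA := by simp [labelOrientation, hA, hcompl A hA]
  inter_nonempty _ hA _ hB := ⟨x, hA.2, hB.2⟩

namespace IsOrientation

variable {Sig U W P Q : Set (Set X)} {A B : Set X}

theorem nonempty (hU : IsOrientation Sig U) (hA : A ∈ U) : A.Nonempty := by
  simpa using hU.inter_nonempty A hA A hA

theorem compl_mem_iff (hU : IsOrientation Sig U) (hA : A ∈ Sig) : Aᶜ ∈ U ↔ A ∉ U := by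
  rw [hU.mem_iff_compl_notMem A hA, not_not]

theorem sdiff_eq_preimage_compl (hU : IsOrientation Sig U) (hW : IsOrientation Sig W) :
    W \ U = compl ⁻¹' (U \ W) := by
  ext B
  simp only [Set.mem_sdiff, Set.mem_preimage]
  constructor
  · rintro ⟨hBW, hBU⟩
    have hB := hW.subset hBW
    exact ⟨(hU.compl_mem_iff hB).mpr hBU, (hW.mem_iff_compl_notMem B hB).mp hBW⟩
  · rintro ⟨hBU, hBW⟩
    have hB := hU.subset hBU
    rw [← compl_compl B]
    exact ⟨(hW.compl_mem_iff hB).mpr hBW, (hU.mem_iff_compl_notMem _ hB).mp hBU⟩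

theorem ne_compl (hU : IsOrientation Sig U) (hA : A ∈ U) : A ≠ Aᶜ := by
  obtain ⟨x, -⟩ := hU.nonempty hA
  have : Nonempty X := ⟨x⟩
  exact ne_compl_self

theorem sdiff_eq_singleton_compl (hU : IsOrientation Sig U) (hW : IsOrientation Sig W)
    (h : U \ W = {A}) : W \ U = {Aᶜ} := by
  rw [hU.sdiff_eq_preimage_compl hW, h]
  ext B
  simp [eq_comm, eq_compl_comm]

theorem eq_of_subset (hU : IsOrientation Sig U) (hW : IsOrientation Sig W) (h : U ⊆ W) :
    U = W := by
  have hWU : W \ U = ∅ := by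
    rw [hU.sdiff_eq_preimage_compl hW, Set.sdiff_eq_empty.mpr h, Set.preimage_empty]
  exact h.antisymm (Set.sdiff_eq_empty.mp hWU)

theorem inter_compl_nonempty_of_minimal (hA : Minimal (· ∈ U) A) (hB : B ∈ U) (hBA : B ≠ A) :
    (B ∩ Aᶜ).Nonempty := by
  by_contra h
  exact hBA (hA.eq_of_le hB fun x hx => by_contra fun hxA => h ⟨x, hx, hxA⟩)

theorem flip (hU : IsOrientation Sig U) (hcompl : ∀ A ∈ Sig, Aᶜ ∈ Sig)
    (hA : Minimal (· ∈ U) A) (hAc : Aᶜ.Nonempty) :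
    IsOrientation Sig (insert Aᶜ (U \ {A})) where
  subset := Set.insert_subset (hcompl A (hU.subset hA.prop)) (Set.sdiff_subset.trans hU.subset)
  mem_iff_compl_notMem B hB := by
    have hAA := hU.ne_compl hA.prop
    have hAU := hA.prop
    have hAcU := (hU.mem_iff_compl_notMem A (hU.subset hAU)).mp hAU
    have hBU := hU.mem_iff_compl_notMem B hB
    simp only [Set.mem_insert_iff, Set.mem_sdiff, Set.mem_singleton_iff, compl_eq_comm (x := B)]
    grind
  inter_nonempty := by
    simp only [Set.mem_insert_iff, Set.mem_sdiff, Set.mem_singleton_iff]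
    rintro B (rfl | ⟨hBU, hBA⟩) C (rfl | ⟨hCU, hCA⟩)
    · simpa using hAc
    · simpa [Set.inter_comm] using inter_compl_nonempty_of_minimal hA hCU hCA
    · exact inter_compl_nonempty_of_minimal hA hBU hBA
    · exact hU.inter_nonempty B hBU C hCU

theorem sdiff_flip (hU : IsOrientation Sig U) (hA : A ∈ U) : U \ insert Aᶜ (U \ {A}) = {A} := by
  have hAA := hU.ne_compl hA
  ext B
  simp only [Set.mem_sdiff, Set.mem_insert_iff, Set.mem_singleton_iff]
  constructor
  · rintro ⟨hB, hB'⟩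
    by_contra hBA
    exact hB' (Or.inr ⟨hB, hBA⟩)
  · rintro rfl
    exact ⟨hA, by simp [hAA]⟩

theorem minimal_of_minimal_sdiff (hU : IsOrientation Sig U) (hW : IsOrientation Sig W)
    (hA : Minimal (· ∈ U \ W) A) : Minimal (· ∈ U) A := by
  refine ⟨hA.prop.1, fun C hCU hCA => ?_⟩
  by_cases hCW : C ∈ W
  · have hAcW := (hW.compl_mem_iff (hU.subset hA.prop.1)).mpr hA.prop.2
    obtain ⟨x, hxC, hxA⟩ := hW.inter_nonempty C hCW _ hAcW
    exact absurd (hCA hxC) hxA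
  · exact hA.2 ⟨hCU, hCW⟩ hCA

theorem subset_of_sdiff_eq_singleton (hcompat : ∀ A ∈ Sig, ∀ B ∈ Sig, SplitCompatible A B)
    (hU : IsOrientation Sig U) (hW : IsOrientation Sig W) (hP : IsOrientation Sig P)
    (hQ : IsOrientation Sig Q) (hUW : U \ W = {A}) (hPQ : P \ Q = {A}) : U ⊆ P := by
  obtain ⟨hAUW, hUW⟩ := Set.eq_singleton_iff_unique_mem.mp hUW
  obtain ⟨hAPQ, hPQ⟩ := Set.eq_singleton_iff_unique_mem.mp hPQ
  have hAcW := (hW.compl_mem_iff (hU.subset hAUW.1)).mpr hAUW.2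
  have hAcQ := (hQ.compl_mem_iff (hU.subset hAUW.1)).mpr hAPQ.2
  -- a side `B` chosen by `U` but not by `P` would meet `A` in all four ways
  intro B hBU
  by_contra hBP
  have hB := hU.subset hBU
  have hBW : B ∈ W := by_contra fun h => hBP (hUW B ⟨hBU, h⟩ ▸ hAPQ.1)
  have hBcP : Bᶜ ∈ P := (hP.compl_mem_iff hB).mpr hBP
  have hBcQ : Bᶜ ∈ Q := by_contra fun h =>
    (hU.mem_iff_compl_notMem A (hU.subset hAUW.1)).mp hAUW.1
      (by rw [← hPQ _ ⟨hBcP, h⟩, compl_compl]; exact hBU)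
  rcases hcompat A (hU.subset hAUW.1) B hB with h | h | h | h
  · exact (hU.inter_nonempty _ hAUW.1 _ hBU).ne_empty h
  · exact (hP.inter_nonempty _ hAPQ.1 _ hBcP).ne_empty h
  · exact (hW.inter_nonempty _ hAcW _ hBW).ne_empty h
  · exact (hQ.inter_nonempty _ hAcQ _ hBcQ).ne_empty h

end IsOrientation

abbrev SplitOrientation (Sig : Set (Set X)) := {U : Set (Set X) // IsOrientation Sig U}

def labelVertex {Sig : Set (Set X)} (hcompl : ∀ A ∈ Sig, Aᶜ ∈ Sig) (x : X) :
    SplitOrientation Sig :=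
  ⟨labelOrientation Sig x, isOrientation_labelOrientation hcompl x⟩

def bunemanGraph (Sig : Set (Set X)) : SimpleGraph (SplitOrientation Sig) where
  Adj U W := ∃ A, U.1 \ W.1 = {A}
  symm := ⟨fun U W ⟨A, h⟩ => ⟨Aᶜ, U.2.sdiff_eq_singleton_compl W.2 h⟩⟩
  loopless := ⟨fun U ⟨A, h⟩ =>
    Set.empty_ne_singleton _ (by rw [← h, sdiff_self, Set.bot_eq_empty])⟩

end Orientation

namespace bunemanGraph

open SimpleGraph

variable {X : Type} {Sig : Set (Set X)} {U W P Q : SplitOrientation Sig} {A : Set X}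

theorem eq_of_sdiff_eq (hcompat : ∀ A ∈ Sig, ∀ B ∈ Sig, SplitCompatible A B)
    (hUW : U.1 \ W.1 = {A}) (hPQ : P.1 \ Q.1 = {A}) : U = P ∧ W = Q :=
  ⟨Subtype.ext <| U.2.eq_of_subset P.2 <|
      IsOrientation.subset_of_sdiff_eq_singleton hcompat U.2 W.2 P.2 Q.2 hUW hPQ,
    Subtype.ext <| W.2.eq_of_subset Q.2 <|
      IsOrientation.subset_of_sdiff_eq_singleton hcompat W.2 U.2 Q.2 P.2
        (U.2.sdiff_eq_singleton_compl W.2 hUW) (P.2.sdiff_eq_singleton_compl Q.2 hPQ)⟩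

theorem sdiff_eq_singleton_of_adj (h : (bunemanGraph Sig).Adj P Q) (hA : A ∈ P.1 \ Q.1) :
    P.1 \ Q.1 = {A} := by
  obtain ⟨B, hB⟩ := h
  rw [hB, Set.mem_singleton_iff] at hA
  rw [hB, hA]

theorem mem_iff_of_reachable (hcompat : ∀ A ∈ Sig, ∀ B ∈ Sig, SplitCompatible A B)
    (hUW : U.1 \ W.1 = {A}) (h : ((bunemanGraph Sig).deleteEdges {s(U, W)}).Reachable P Q) :
    A ∈ P.1 ↔ A ∈ Q.1 := by
  have hflip : ∀ ⦃R R'⦄, (bunemanGraph Sig).Adj R R' → A ∈ R.1 → A ∉ R'.1 →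
      s(R, R') = s(U, W) := by
    intro R R' hRR' hA hA'
    obtain ⟨rfl, rfl⟩ := eq_of_sdiff_eq hcompat (sdiff_eq_singleton_of_adj hRR' ⟨hA, hA'⟩) hUW
    rfl
  have hkey : ∀ ⦃R R'⦄, ((bunemanGraph Sig).deleteEdges {s(U, W)}).Adj R R' →
      (A ∈ R.1 ↔ A ∈ R'.1) := by
    intro R R' hRR'
    rw [deleteEdges_adj, Set.mem_singleton_iff] at hRR'
    obtain ⟨hadj, hne⟩ := hRR'
    exact ⟨fun hA => by_contra fun hA' => hne (hflip hadj hA hA'),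
      fun hA' => by_contra fun hA => hne (Sym2.eq_swap.trans (hflip hadj.symm hA' hA))⟩
  exact h.mem_of_adj_closed (S := {R : SplitOrientation Sig | A ∈ P.1 ↔ A ∈ R.1})
    (fun _ _ hRR' hR => hR.trans (hkey hRR')) (show A ∈ P.1 ↔ A ∈ P.1 from Iff.rfl)

theorem isAcyclic (hcompat : ∀ A ∈ Sig, ∀ B ∈ Sig, SplitCompatible A B) :
    (bunemanGraph Sig).IsAcyclic :=
  isAcyclic_iff_forall_adj_isBridge.mpr fun U W ⟨A, hUW⟩ => isBridge_iff.mpr fun h => by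
    have hA : A ∈ U.1 \ W.1 := (Set.eq_singleton_iff_unique_mem.mp hUW).1
    exact hA.2 ((mem_iff_of_reachable hcompat hUW h).mp hA.1)

theorem exists_adj_of_minimal (hne : ∀ A ∈ Sig, A ≠ ∅ ∧ A ≠ Set.univ)
    (hcompl : ∀ A ∈ Sig, Aᶜ ∈ Sig) (hA : Minimal (· ∈ U.1) A) :
    ∃ U', (bunemanGraph Sig).Adj U U' ∧ U.1 \ U'.1 = {A} ∧ U'.1 = insert Aᶜ (U.1 \ {A}) :=
  have hflip := U.2.flip hcompl hA (Set.nonempty_compl.mpr (hne A (U.2.subset hA.prop)).2)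
  ⟨⟨_, hflip⟩, ⟨A, U.2.sdiff_flip hA.prop⟩, U.2.sdiff_flip hA.prop, rfl⟩

/-- Flipping a minimal side on which `U` and `W` disagree moves `U` one step towards `W`. -/
theorem preconnected [Finite X] (hne : ∀ A ∈ Sig, A ≠ ∅ ∧ A ≠ Set.univ)
    (hcompl : ∀ A ∈ Sig, Aᶜ ∈ Sig) : (bunemanGraph Sig).Preconnected := by
  intro U W
  induction hn : (U.1 \ W.1).ncard using Nat.strong_induction_on generalizing U with
  | _ n ih =>
    by_cases hUW : U.1 \ W.1 = ∅
    · rw [Subtype.ext (U.2.eq_of_subset W.2 (Set.sdiff_eq_empty.mp hUW))]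
    obtain ⟨A, hA⟩ := exists_minimal_of_wellFoundedLT (· ∈ U.1 \ W.1)
      (Set.nonempty_iff_ne_empty.mpr hUW)
    obtain ⟨U', hadj, -, hU'⟩ :=
      exists_adj_of_minimal hne hcompl (U.2.minimal_of_minimal_sdiff W.2 hA)
    have hAcW : Aᶜ ∈ W.1 := (W.2.compl_mem_iff (U.2.subset hA.prop.1)).mpr hA.prop.2
    have hsub : U'.1 \ W.1 ⊆ (U.1 \ W.1) \ {A} := by
      rw [hU']
      rintro B ⟨rfl | ⟨hBU, hBA⟩, hBW⟩
      exacts [absurd hAcW hBW, ⟨⟨hBU, hBW⟩, hBA⟩]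
    have hlt : (U'.1 \ W.1).ncard < n :=
      hn ▸ (Set.ncard_le_ncard hsub).trans_lt (Set.ncard_sdiff_singleton_lt_of_mem hA.prop)
    exact hadj.reachable.trans (ih _ hlt U' rfl)

theorem connected [Finite X] [Nonempty X] (hne : ∀ A ∈ Sig, A ≠ ∅ ∧ A ≠ Set.univ)
    (hcompl : ∀ A ∈ Sig, Aᶜ ∈ Sig) : (bunemanGraph Sig).Connected :=
  have : Nonempty (SplitOrientation Sig) := ⟨labelVertex hcompl (Classical.arbitrary X)⟩
  ⟨preconnected hne hcompl⟩

theorem edgeSide_eq (hconn : (bunemanGraph Sig).Preconnected)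
    (hcompat : ∀ A ∈ Sig, ∀ B ∈ Sig, SplitCompatible A B) (hUW : U.1 \ W.1 = {A}) :
    (bunemanGraph Sig).edgeSide U W = {P | A ∈ P.1} := by
  have hA : A ∈ U.1 \ W.1 := (Set.eq_singleton_iff_unique_mem.mp hUW).1
  ext P
  refine ⟨fun hP => (mem_iff_of_reachable hcompat hUW hP).mpr hA.1, fun hAP => ?_⟩
  refine (hconn.mem_edgeSide_or U W P).resolve_right fun hPW => hA.2 ?_
  exact (mem_iff_of_reachable hcompat hUW (mem_edgeSide_swap.mp hPW)).mp hAP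

theorem exists_sdiff_eq_singleton (hconn : (bunemanGraph Sig).Preconnected)
    (hne : ∀ A ∈ Sig, A ≠ ∅ ∧ A ≠ Set.univ) (hcompl : ∀ A ∈ Sig, Aᶜ ∈ Sig) (hA : A ∈ Sig) :
    ∃ U W : SplitOrientation Sig, U.1 \ W.1 = {A} := by
  -- otherwise every orientation reachable from one choosing `A` chooses `A`
  by_contra! h
  obtain ⟨x, hx⟩ := Set.nonempty_iff_ne_empty.mpr (hne A hA).1
  obtain ⟨y, hy⟩ := Set.nonempty_compl.mpr (hne A hA).2
  refine hy ((hconn (labelVertex hcompl x) (labelVertex hcompl y)).mem_of_adj_closed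
    (S := {R : SplitOrientation Sig | A ∈ R.1}) (fun R R' hRR' hR => ?_) ⟨hA, hx⟩).2
  exact by_contra fun hR' => h R R' (sdiff_eq_singleton_of_adj hRR' ⟨hR, hR'⟩)

/-- An orientation of degree at most two has at most two minimal sides, and these share a
label, which then lies in every chosen side. -/
theorem mem_range_labelVertex [Finite X] [Nonempty X]
    (hne : ∀ A ∈ Sig, A ≠ ∅ ∧ A ≠ Set.univ) (hcompl : ∀ A ∈ Sig, Aᶜ ∈ Sig)
    (U : SplitOrientation Sig) (hdeg : ((bunemanGraph Sig).neighborSet U).ncard ≤ 2) :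
    U ∈ Set.range (labelVertex hcompl) := by
  set M := {A | Minimal (· ∈ U.1) A}
  have hM : M ⊆ (fun W : SplitOrientation Sig => ⋃₀ (U.1 \ W.1)) ''
      (bunemanGraph Sig).neighborSet U := by
    intro A hA
    obtain ⟨W, hadj, hUW, -⟩ := exists_adj_of_minimal hne hcompl hA
    exact ⟨W, hadj, by simp only [hUW, Set.sUnion_singleton]⟩
  obtain ⟨x, hx⟩ := Set.sInter_nonempty_of_ncard_le_two (Set.toFinite M)
    ((Set.ncard_le_ncard hM).trans ((Set.ncard_image_le (Set.toFinite _)).trans hdeg))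
    fun A hA B hB => U.2.inter_nonempty A hA.prop B hB.prop
  refine ⟨x, Subtype.ext (U.2.eq_of_subset (isOrientation_labelOrientation hcompl x) ?_).symm⟩
  intro B hB
  obtain ⟨A, hAB, hA⟩ := exists_minimal_le_of_wellFoundedLT (· ∈ U.1) B hB
  exact ⟨U.2.subset hB, hAB (hx A hA)⟩

end bunemanGraph

section BunemanTree

open SimpleGraph

variable {X : Type} [Finite X] [Nonempty X] (Sig : Set (Set X))
  (hne : ∀ A ∈ Sig, A ≠ ∅ ∧ A ≠ Set.univ) (hcompl : ∀ A ∈ Sig, Aᶜ ∈ Sig)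
  (hcompat : ∀ A ∈ Sig, ∀ B ∈ Sig, SplitCompatible A B)

noncomputable def bunemanTree : XTree X where
  V := SplitOrientation Sig
  fintypeV := Fintype.ofFinite _
  G := bunemanGraph Sig
  connected := bunemanGraph.connected hne hcompl
  acyclic := bunemanGraph.isAcyclic hcompat
  φ := labelVertex hcompl
  labelLowDegree := bunemanGraph.mem_range_labelVertex hne hcompl

theorem bunemanTree_side {U W : SplitOrientation Sig} {A : Set X} (hUW : U.1 \ W.1 = {A}) :
    (bunemanTree Sig hne hcompl hcompat).side U W = A := by
  have hA : A ∈ Sig := U.2.subset (Set.eq_singleton_iff_unique_mem.mp hUW).1.1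
  change labelVertex hcompl ⁻¹' (bunemanGraph Sig).edgeSide U W = A
  rw [bunemanGraph.edgeSide_eq (bunemanGraph.preconnected hne hcompl) hcompat hUW]
  ext x
  simp [labelVertex, labelOrientation, hA]

theorem bunemanTree_splits : (bunemanTree Sig hne hcompl hcompat).splits = Sig := by
  ext A
  rw [XTree.mem_splits]
  constructor
  · rintro ⟨U, W, ⟨B, hUW⟩, rfl⟩
    rw [bunemanTree_side Sig hne hcompl hcompat hUW]
    exact U.2.subset (Set.eq_singleton_iff_unique_mem.mp hUW).1.1
  · intro hA
    obtain ⟨U, W, hUW⟩ := bunemanGraph.exists_sdiff_eq_singleton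
      (bunemanGraph.preconnected hne hcompl) hne hcompl hA
    exact ⟨U, W, ⟨A, hUW⟩, (bunemanTree_side Sig hne hcompl hcompat hUW).symm⟩

end BunemanTree

namespace XTree

open SimpleGraph

variable {X : Type} {T : XTree X}

variable (T) in
def orientationAt (v : T.V) : Set (Set X) :=
  {A | ∃ p q, T.G.Adj p q ∧ v ∈ T.G.edgeSide p q ∧ A = T.side p q}

theorem side_mem_orientationAt {p q v : T.V} (hpq : T.G.Adj p q) :
    T.side p q ∈ T.orientationAt v ↔ v ∈ T.G.edgeSide p q :=
  ⟨fun ⟨_, _, hpq', hv, h⟩ => by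
    obtain ⟨rfl, rfl⟩ := eq_of_side_eq hpq' hpq h.symm
    exact hv, fun hv => ⟨p, q, hpq, hv, rfl⟩⟩

variable (T) in
theorem isOrientation_orientationAt (v : T.V) : IsOrientation T.splits (T.orientationAt v) where
  subset := fun _ ⟨p, q, hpq, _, h⟩ => ⟨p, q, hpq, h⟩
  mem_iff_compl_notMem A hA := by
    obtain ⟨p, q, hpq, rfl⟩ := T.mem_splits.mp hA
    rw [← side_swap hpq, side_mem_orientationAt hpq, side_mem_orientationAt hpq.symm,
      ← T.isTree.compl_edgeSide hpq, Set.notMem_compl_iff]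
  inter_nonempty := by
    rintro _ ⟨p, q, hpq, hv, rfl⟩ _ ⟨r, s, hrs, hv', rfl⟩
    exact exists_label_mem_edgeSide_inter hpq hrs ⟨hv, hv'⟩

theorem side_mem_orientationAt_sdiff {u m w : T.V} (hum : T.G.Adj u m)
    (hw : w ∈ T.G.edgeSide m u) : T.side u m ∈ T.orientationAt u \ T.orientationAt w := by
  rw [← T.isTree.compl_edgeSide hum] at hw
  rw [Set.mem_sdiff, side_mem_orientationAt hum, side_mem_orientationAt hum]
  exact ⟨mem_edgeSide_self u m, hw⟩

theorem orientationAt_sdiff {u w : T.V} (huw : T.G.Adj u w) :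
    T.orientationAt u \ T.orientationAt w = {T.side u w} := by
  refine Set.eq_singleton_iff_unique_mem.mpr ⟨side_mem_orientationAt_sdiff huw
    (mem_edgeSide_self w u), ?_⟩
  rintro _ ⟨⟨p, q, hpq, hu, rfl⟩, hw⟩
  rw [side_mem_orientationAt hpq] at hw
  obtain ⟨rfl, rfl⟩ := T.isTree.eq_of_adj_of_mem_edgeSide huw hu hw
  rfl

theorem orientationAt_φ (x : X) : T.orientationAt (T.φ x) = labelOrientation T.splits x := by
  ext A
  constructor
  · rintro ⟨p, q, hpq, hx, rfl⟩
    exact ⟨⟨p, q, hpq, rfl⟩, hx⟩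
  · rintro ⟨hA, hx⟩
    obtain ⟨p, q, hpq, rfl⟩ := T.mem_splits.mp hA
    exact ⟨p, q, hpq, hx, rfl⟩

variable (T) in
def toBuneman (v : T.V) : SplitOrientation T.splits :=
  ⟨T.orientationAt v, T.isOrientation_orientationAt v⟩

theorem toBuneman_injective : Function.Injective T.toBuneman := by
  intro u w h
  by_contra huw
  obtain ⟨m, hum, hw⟩ := T.connected.preconnected.exists_adj_mem_edgeSide huw
  have hmem := side_mem_orientationAt_sdiff hum hw
  rw [show T.orientationAt u = T.orientationAt w from congrArg Subtype.val h, sdiff_self] at hmem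
  exact hmem

theorem adj_iff_toBuneman_adj {u w : T.V} :
    T.G.Adj u w ↔ (bunemanGraph T.splits).Adj (T.toBuneman u) (T.toBuneman w) := by
  refine ⟨fun h => ⟨_, orientationAt_sdiff h⟩, fun ⟨A, hA⟩ => ?_⟩
  have huw : u ≠ w := by
    rintro rfl
    exact Set.empty_ne_singleton A (by rw [← hA, sdiff_self, Set.bot_eq_empty])
  obtain ⟨m, hum, hw⟩ := T.connected.preconnected.exists_adj_mem_edgeSide huw
  obtain ⟨m', hwm', hu⟩ := T.connected.preconnected.exists_adj_mem_edgeSide huw.symm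
  have h1 : T.side u m = A :=
    (Set.eq_singleton_iff_unique_mem.mp hA).2 _ (side_mem_orientationAt_sdiff hum hw)
  have h2 : T.side w m' = Aᶜ :=
    (Set.eq_singleton_iff_unique_mem.mp ((T.toBuneman u).2.sdiff_eq_singleton_compl
      (T.toBuneman w).2 hA)).2 _ (side_mem_orientationAt_sdiff hwm' hu)
  obtain ⟨rfl, rfl⟩ := eq_of_side_eq hwm' hum.symm (by rw [h2, ← h1, side_swap hum])
  exact hum

/-- The image of `T` is closed under Buneman adjacency, since each split is flipped by a
single Buneman edge. -/
theorem toBuneman_surjective [Finite X] : Function.Surjective T.toBuneman := by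
  intro U
  obtain ⟨v⟩ := T.connected.nonempty
  refine ((bunemanGraph.preconnected T.ne_empty_and_ne_univ_of_mem_splits T.compl_mem_splits)
    (T.toBuneman v) U).mem_of_adj_closed (S := Set.range T.toBuneman) ?_ ⟨v, rfl⟩
  rintro _ W ⟨A, hA⟩ ⟨v, rfl⟩
  obtain ⟨p, q, hpq, -, rfl⟩ := (Set.eq_singleton_iff_unique_mem.mp hA).1.1
  exact ⟨q, (bunemanGraph.eq_of_sdiff_eq T.splitCompatible_of_mem_splits
    (U := T.toBuneman p) (W := T.toBuneman q) (orientationAt_sdiff hpq) hA).2⟩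

theorem isom_bunemanTree [Finite X] [Nonempty X] {Sig : Set (Set X)}
    (hne : ∀ A ∈ Sig, A ≠ ∅ ∧ A ≠ Set.univ) (hcompl : ∀ A ∈ Sig, Aᶜ ∈ Sig)
    (hcompat : ∀ A ∈ Sig, ∀ B ∈ Sig, SplitCompatible A B) (hT : T.splits = Sig) :
    T.Isom (bunemanTree Sig hne hcompl hcompat) := by
  subst hT
  exact ⟨Equiv.ofBijective _ ⟨toBuneman_injective, toBuneman_surjective⟩,
    fun _ _ => adj_iff_toBuneman_adj, fun x => Subtype.ext (orientationAt_φ x)⟩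

theorem Isom.symm {T' : XTree X} (h : T.Isom T') : T'.Isom T := by
  obtain ⟨e, hadj, hφ⟩ := h
  refine ⟨e.symm, fun u v => ?_, fun x => by rw [← hφ x, e.symm_apply_apply]⟩
  rw [hadj, e.apply_symm_apply, e.apply_symm_apply]

theorem Isom.trans {T' T'' : XTree X} (h : T.Isom T') (h' : T'.Isom T'') : T.Isom T'' := by
  obtain ⟨e, hadj, hφ⟩ := h
  obtain ⟨e', hadj', hφ'⟩ := h'
  exact ⟨e.trans e', fun u v => (hadj u v).trans (hadj' _ _), fun x => by
    rw [Equiv.trans_apply, hφ, hφ']⟩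

end XTree

/-- Splits Equivalence Theorem (Buneman): splits of a common `X`-tree are
pairwise compatible, and conversely every collection of pairwise compatible
`X`-splits is the split set of an `X`-tree which is unique up to isomorphism. -/
theorem splits_equivalence {X : Type} [Fintype X] [Nonempty X] :
    (∀ T : XTree X, ∀ A ∈ T.splits, ∀ B ∈ T.splits, SplitCompatible A B) ∧
    (∀ Sig : Set (Set X),
      (∀ A ∈ Sig, A ≠ ∅ ∧ A ≠ Set.univ) →
      (∀ A ∈ Sig, Aᶜ ∈ Sig) →
      (∀ A ∈ Sig, ∀ B ∈ Sig, SplitCompatible A B) →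
      (∃ T : XTree X, T.splits = Sig) ∧
        ∀ T T' : XTree X, T.splits = Sig → T'.splits = Sig → T.Isom T') := by
  refine ⟨XTree.splitCompatible_of_mem_splits, fun Sig hne hcompl hcompat => ?_⟩
  refine ⟨⟨bunemanTree Sig hne hcompl hcompat, bunemanTree_splits Sig hne hcompl hcompat⟩, ?_⟩
  intro T T' hT hT'
  exact (T.isom_bunemanTree hne hcompl hcompat hT).trans
    (T'.isom_bunemanTree hne hcompl hcompat hT').symm
end
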